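/- arXiv:2110.08606 — 5 statements merged into one kernel-verified Lean document; each statement's English description precedes it below -/
import Mathlib

section
/- Applying the Kreweras complement construction twice to a non-crossing partition P of [n] yields the partition obtained from P by rotating all elements once in the clockwise direction, i.e., (P^c)^c = {B - 1 mod n : B ∈ P} (where each element i of a block is replaced by i-1, taken cyclically). -/
/-- No two distinct blocks of `R` cross. -/
def NonCrossing (m : ℕ) (R : Finset (Finset (Fin m))) : Prop :=
  ∀ B ∈ R, ∀ B' ∈ R, B ≠ B' →
    ∀ i ∈ B, ∀ j ∈ B, ∀ k ∈ B', ∀ l ∈ B', ¬(i < k ∧ k < j ∧ j < l)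

/-- `R` is a non-crossing partition of `Fin m`. -/
def IsNCPartition (m : ℕ) (R : Finset (Finset (Fin m))) : Prop :=
  (∀ B ∈ R, B.Nonempty) ∧
  (∀ B ∈ R, ∀ B' ∈ R, B ≠ B' → Disjoint B B') ∧
  (∀ i : Fin m, ∃ B ∈ R, i ∈ B) ∧
  NonCrossing m R

/-- Refinement order. -/
def refines (m : ℕ) (P Q : Finset (Finset (Fin m))) : Prop :=
  ∀ B ∈ P, ∃ B' ∈ Q, B ⊆ B'

/-- The unprimed element `i` sits at position `2*i` in the interleaved order
`1 < 1' < 2 < 2' < ... < n < n'`. -/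
def evenEmb (n : ℕ) (i : Fin n) : Fin (2 * n) := ⟨2 * i.val, by have := i.isLt; omega⟩

/-- The primed element `i'` sits at position `2*i + 1` in the interleaved order. -/
def oddEmb (n : ℕ) (i : Fin n) : Fin (2 * n) := ⟨2 * i.val + 1, by have := i.isLt; omega⟩

/-- The union of `P` placed on the unprimed positions and `Q` placed on the primed
positions of the interleaved set of `2n` elements. -/
def interleave (n : ℕ) (P Q : Finset (Finset (Fin n))) : Finset (Finset (Fin (2 * n))) :=
  P.image (Finset.image (evenEmb n)) ∪ Q.image (Finset.image (oddEmb n))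

/-- `Q` is the Kreweras complement of `P`: it is the coarsest partition of the primed
copy of `[n]` such that `P ∪ Q` is non-crossing in the interleaved order. -/
def IsKreweras (n : ℕ) (P Q : Finset (Finset (Fin n))) : Prop :=
  IsNCPartition n Q ∧ NonCrossing (2 * n) (interleave n P Q) ∧
    ∀ Q' : Finset (Finset (Fin n)), IsNCPartition n Q' →
      NonCrossing (2 * n) (interleave n P Q') → refines n Q' Q



set_option linter.unusedSectionVars false

open Finset

section DCalc
variable {n : ℕ} [NeZero n]

/-- cyclic distance from `a` to `b` -/
def DD (n : ℕ) [NeZero n] (a b : Fin n) : ℕ := (b - a).val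

lemma DD_lt (a b : Fin n) : DD n a b < n := (b - a).isLt

lemma DD_self (a : Fin n) : DD n a a = 0 := by simp [DD]

lemma DD_eq_zero_iff {a b : Fin n} : DD n a b = 0 ↔ a = b := by
  constructor
  · intro h
    have h0 : b - a = 0 := Fin.ext (by simpa [DD] using h)
    exact (sub_eq_zero.mp h0).symm
  · rintro rfl; simp [DD]

lemma DD_val (a b : Fin n) :
    (a.val ≤ b.val ∧ DD n a b = b.val - a.val) ∨
    (b.val < a.val ∧ DD n a b = b.val + n - a.val) := by
  have ha := a.isLt; have hb := b.isLt
  have hs : DD n a b = (n - a.val + b.val) % n := by rw [DD, Fin.sub_def]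
  rcases le_or_gt a.val b.val with h | h
  · left
    refine ⟨h, ?_⟩
    have : n - a.val + b.val = (b.val - a.val) + n := by omega
    rw [hs, this, Nat.add_mod_right, Nat.mod_eq_of_lt (by omega)]
  · right
    refine ⟨h, ?_⟩
    have : n - a.val + b.val = b.val + n - a.val := by omega
    rw [hs, this, Nat.mod_eq_of_lt (by omega)]

lemma DD_tri (a b c : Fin n) :
    DD n a b + DD n b c = DD n a c ∨ DD n a b + DD n b c = DD n a c + n := by
  have h : (b - a) + (c - b) = c - a := by abel
  have hv : DD n a c = (DD n a b + DD n b c) % n := by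
    rw [DD, ← h, Fin.add_def]; rfl
  have h1 := DD_lt a b; have h2 := DD_lt b c
  rcases Nat.lt_or_ge (DD n a b + DD n b c) n with hlt | hge
  · left; rw [hv, Nat.mod_eq_of_lt hlt]
  · right
    have : (DD n a b + DD n b c) % n = DD n a b + DD n b c - n := by
      rw [Nat.mod_eq_sub_mod hge, Nat.mod_eq_of_lt (by omega)]
    omega

lemma DD_inj {a x y : Fin n} (h : DD n a x = DD n a y) : x = y := by
  have h0 : x - a = y - a := Fin.ext h
  have := congrArg (· + a) h0
  simpa [sub_add_cancel] using this

lemma DD_one (h2 : 2 ≤ n) (x : Fin n) : DD n x (x + 1) = 1 := by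
  have : x + 1 - x = 1 := by abel
  rw [DD, this, Fin.val_one' n, Nat.mod_eq_of_lt (by omega)]

lemma DD_last (h2 : 2 ≤ n) (x : Fin n) : DD n (x + 1) x = n - 1 := by
  have t := DD_tri (x + 1) x (x + 1)
  rw [DD_self, DD_one h2 x] at t
  omega

lemma DD_succ (h2 : 2 ≤ n) {s x : Fin n} (h : x + 1 ≠ s) :
    DD n s (x + 1) = DD n s x + 1 := by
  have t := DD_tri s x (x + 1)
  rw [DD_one h2 x] at t
  rcases t with t | t
  · omega
  · exfalso
    have h1 := DD_lt s x; have h3 := DD_lt s (x + 1)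
    have : DD n s (x + 1) = 0 := by omega
    exact h (DD_eq_zero_iff.mp this).symm

lemma DD_pred (h2 : 2 ≤ n) {s x : Fin n} (h : x ≠ s) :
    DD n s x = DD n s (x - 1) + 1 := by
  have := DD_succ h2 (s := s) (x := x - 1) (by rwa [sub_add_cancel])
  rwa [sub_add_cancel] at this

/-- membership in the half-open cyclic arc `(a, b]` -/
def Arc (n : ℕ) [NeZero n] (a b x : Fin n) : Prop :=
  0 < DD n a x ∧ DD n a x ≤ DD n a b

lemma arc_base (s : Fin n) {i j : Fin n} (x : Fin n) :
    Arc n i j x ↔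
      (DD n s i < DD n s j ∧ DD n s i < DD n s x ∧ DD n s x ≤ DD n s j) ∨
      (DD n s j < DD n s i ∧ (DD n s i < DD n s x ∨ DD n s x ≤ DD n s j)) := by
  have t1 := DD_tri s i x
  have t2 := DD_tri s i j
  have l1 := DD_lt s i; have l2 := DD_lt s j; have l3 := DD_lt s x
  have l4 := DD_lt i x; have l5 := DD_lt i j
  unfold Arc
  rcases t1 with t1 | t1 <;> rcases t2 with t2 | t2 <;> omega

end DCalc

section RelSec
variable {n : ℕ} [NeZero n]

/-- no block of `P` crosses the chord `{i', j'}` -/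
def KRel (n : ℕ) [NeZero n] (P : Finset (Finset (Fin n))) (i j : Fin n) : Prop :=
  ∀ B ∈ P, ¬((∃ p ∈ B, Arc n i j p) ∧ (∃ p ∈ B, Arc n j i p))

lemma rel_refl (P : Finset (Finset (Fin n))) (i : Fin n) : KRel n P i i := by
  intro B _ h
  obtain ⟨⟨p, _, hp1, hp2⟩, _⟩ := h
  rw [DD_self] at hp2
  omega

lemma rel_symm {P : Finset (Finset (Fin n))} {i j : Fin n} (h : KRel n P i j) :
    KRel n P j i := fun B hB hc => h B hB ⟨hc.2, hc.1⟩

lemma two_le_of_ne {i j : Fin n} (h : i ≠ j) : 2 ≤ n := by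
  have hi := i.isLt; have hj := j.isLt
  have : i.val ≠ j.val := fun hv => h (Fin.ext hv)
  omega

lemma rel_trans {P : Finset (Finset (Fin n))} {i j k : Fin n}
    (hij : KRel n P i j) (hjk : KRel n P j k) : KRel n P i k := by
  by_cases hik : i = k
  · subst hik; exact rel_refl P i
  by_cases h1 : i = j
  · subst h1; exact hjk
  by_cases h2 : j = k
  · subst h2; exact hij
  intro B hB hc
  obtain ⟨⟨b1, hb1, a1⟩, ⟨b2, hb2, a2⟩⟩ := hc
  -- coordinates with base i
  have qi : DD n i i = 0 := DD_self i
  have qk0 : 0 < DD n i k := by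
    rcases Nat.eq_zero_or_pos (DD n i k) with h | h
    · exact absurd (DD_eq_zero_iff.mp h) hik
    · exact h
  have qj0 : 0 < DD n i j := by
    rcases Nat.eq_zero_or_pos (DD n i j) with h | h
    · exact absurd (DD_eq_zero_iff.mp h) h1
    · exact h
  have qjk : DD n i j ≠ DD n i k := fun h => h2 (DD_inj h)
  have a1' := (arc_base i b1).mp a1
  have a2' := (arc_base i b2).mp a2
  rw [qi] at a1' a2'
  -- a1' : (0 < DD i k ∧ 0 < DD i b1 ∧ DD i b1 ≤ DD i k) ∨ (DD i k < 0 ∧ _)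
  have hb1' : 0 < DD n i b1 ∧ DD n i b1 ≤ DD n i k := by omega
  have hb2' : DD n i k < DD n i b2 ∨ DD n i b2 = 0 := by omega
  rcases le_or_gt (DD n i j) (DD n i k) with hc1 | hc1
  · -- j in (i,k]
    rcases le_or_gt (DD n i b1) (DD n i j) with hd | hd
    · -- b1 ∈ (i,j], b2 ∈ (j,i]
      refine hij B hB ⟨⟨b1, hb1, ?_⟩, ⟨b2, hb2, ?_⟩⟩
      · rw [arc_base i]; omega
      · rw [arc_base i]; omega
    · -- b1 ∈ (j,k], b2 ∈ (k,j]
      refine hjk B hB ⟨⟨b1, hb1, ?_⟩, ⟨b2, hb2, ?_⟩⟩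
      · rw [arc_base i]; omega
      · rw [arc_base i]; omega
  · -- j in (k,i)
    rcases hb2' with hb2' | hb2'
    · rcases le_or_gt (DD n i b2) (DD n i j) with hd | hd
      · -- b2 ∈ (k,j], b1 ∈ (j,k]
        refine hjk B hB ⟨⟨b1, hb1, ?_⟩, ⟨b2, hb2, ?_⟩⟩
        · rw [arc_base i]; omega
        · rw [arc_base i]; omega
      · -- b2 ∈ (j,i], b1 ∈ (i,j]
        refine hij B hB ⟨⟨b1, hb1, ?_⟩, ⟨b2, hb2, ?_⟩⟩
        · rw [arc_base i]; omega
        · rw [arc_base i]; omega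
    · -- b2 = i
      refine hij B hB ⟨⟨b1, hb1, ?_⟩, ⟨b2, hb2, ?_⟩⟩
      · rw [arc_base i]; omega
      · rw [arc_base i]; omega

end RelSec


section CycSec
variable {m : ℕ} [NeZero m]

lemma flt {x y : Fin m} (h : x.val < y.val) : x < y := h

lemma cyc {R : Finset (Finset (Fin m))} (h : NonCrossing m R)
    {A B : Finset (Fin m)} (hA : A ∈ R) (hB : B ∈ R) (hAB : A ≠ B)
    {a c b d : Fin m} (ha : a ∈ A) (hc : c ∈ A) (hb : b ∈ B) (hd : d ∈ B)
    (h1 : 0 < DD m a b) (h2 : DD m a b < DD m a c) (h3 : DD m a c < DD m a d) :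
    False := by
  have la := a.isLt; have lb := b.isLt; have lc := c.isLt; have ld := d.isLt
  rcases DD_val a b with ⟨e1, e2⟩ | ⟨e1, e2⟩ <;>
    rcases DD_val a c with ⟨f1, f2⟩ | ⟨f1, f2⟩ <;>
    rcases DD_val a d with ⟨g1, g2⟩ | ⟨g1, g2⟩
  · exact h A hA B hB hAB a ha c hc b hb d hd ⟨flt (by omega), flt (by omega), flt (by omega)⟩
  · exact h B hB A hA hAB.symm d hd b hb a ha c hc ⟨flt (by omega), flt (by omega), flt (by omega)⟩
  · omega
  · exact h A hA B hB hAB c hc a ha d hd b hb ⟨flt (by omega), flt (by omega), flt (by omega)⟩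
  · omega
  · omega
  · omega
  · exact h B hB A hA hAB.symm b hb d hd c hc a ha ⟨flt (by omega), flt (by omega), flt (by omega)⟩

end CycSec

section EmbSec
variable {n : ℕ} [NeZero n]

instance inst2n : NeZero (2 * n) := ⟨by have := NeZero.ne n; omega⟩

lemma DD_even_even (a b : Fin n) :
    DD (2 * n) (evenEmb n a) (evenEmb n b) = 2 * DD n a b := by
  have la := a.isLt; have lb := b.isLt
  rcases DD_val (n := 2 * n) (evenEmb n a) (evenEmb n b) with ⟨e1, e2⟩ | ⟨e1, e2⟩ <;>
    rcases DD_val a b with ⟨f1, f2⟩ | ⟨f1, f2⟩ <;>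
    simp only [evenEmb] at e1 e2 ⊢ <;> omega

lemma DD_odd_odd (a b : Fin n) :
    DD (2 * n) (oddEmb n a) (oddEmb n b) = 2 * DD n a b := by
  have la := a.isLt; have lb := b.isLt
  rcases DD_val (n := 2 * n) (oddEmb n a) (oddEmb n b) with ⟨e1, e2⟩ | ⟨e1, e2⟩ <;>
    rcases DD_val a b with ⟨f1, f2⟩ | ⟨f1, f2⟩ <;>
    simp only [oddEmb] at e1 e2 ⊢ <;> omega

lemma DD_odd_even {a b : Fin n} (hab : a ≠ b) :
    DD (2 * n) (oddEmb n a) (evenEmb n b) = 2 * DD n a b - 1 := by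
  have la := a.isLt; have lb := b.isLt
  have hv : a.val ≠ b.val := fun h => hab (Fin.ext h)
  rcases DD_val (n := 2 * n) (oddEmb n a) (evenEmb n b) with ⟨e1, e2⟩ | ⟨e1, e2⟩ <;>
    rcases DD_val a b with ⟨f1, f2⟩ | ⟨f1, f2⟩ <;>
    simp only [oddEmb, evenEmb] at e1 e2 ⊢ <;> omega

lemma DD_odd_even_self (a : Fin n) :
    DD (2 * n) (oddEmb n a) (evenEmb n a) = 2 * n - 1 := by
  have la := a.isLt
  rcases DD_val (n := 2 * n) (oddEmb n a) (evenEmb n a) with ⟨e1, e2⟩ | ⟨e1, e2⟩ <;>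
    simp only [oddEmb, evenEmb] at e1 e2 ⊢ <;> omega

end EmbSec

section ClassSec
variable {n : ℕ} [NeZero n]

open Classical in
noncomputable def cls (n : ℕ) [NeZero n] (P : Finset (Finset (Fin n))) (i : Fin n) :
    Finset (Fin n) :=
  Finset.univ.filter (fun j => KRel n P i j)

noncomputable def classes (n : ℕ) [NeZero n] (P : Finset (Finset (Fin n))) :
    Finset (Finset (Fin n)) :=
  Finset.univ.image (cls n P)

lemma mem_cls {P : Finset (Finset (Fin n))} {i j : Fin n} :
    j ∈ cls n P i ↔ KRel n P i j := by
  simp [cls]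

lemma cls_eq_of_rel {P : Finset (Finset (Fin n))} {i j : Fin n} (h : KRel n P i j) :
    cls n P i = cls n P j := by
  ext x
  simp only [mem_cls]
  exact ⟨fun hx => rel_trans (rel_symm h) hx, fun hx => rel_trans h hx⟩

lemma classes_mem {P : Finset (Finset (Fin n))} {C : Finset (Fin n)} :
    C ∈ classes n P ↔ ∃ i, cls n P i = C := by
  simp [classes]

lemma classes_nonempty {P : Finset (Finset (Fin n))} :
    ∀ C ∈ classes n P, C.Nonempty := by
  intro C hC
  obtain ⟨i, rfl⟩ := classes_mem.mp hC
  exact ⟨i, mem_cls.mpr (rel_refl P i)⟩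

lemma classes_disjoint {P : Finset (Finset (Fin n))} :
    ∀ C ∈ classes n P, ∀ C' ∈ classes n P, C ≠ C' → Disjoint C C' := by
  intro C hC C' hC' hne
  obtain ⟨a, rfl⟩ := classes_mem.mp hC
  obtain ⟨b, rfl⟩ := classes_mem.mp hC'
  rw [Finset.disjoint_left]
  intro x hx hx'
  exact hne ((cls_eq_of_rel (mem_cls.mp hx)).trans (cls_eq_of_rel (mem_cls.mp hx')).symm)

lemma classes_cover {P : Finset (Finset (Fin n))} :
    ∀ i : Fin n, ∃ C ∈ classes n P, i ∈ C :=
  fun i => ⟨cls n P i, classes_mem.mpr ⟨i, rfl⟩, mem_cls.mpr (rel_refl P i)⟩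

lemma classes_nc {P : Finset (Finset (Fin n))} : NonCrossing n (classes n P) := by
  intro C hC C' hC' hne i hi j hj k hk l hl hpat
  obtain ⟨hik, hkj, hjl⟩ := hpat
  obtain ⟨a, rfl⟩ := classes_mem.mp hC
  obtain ⟨b, rfl⟩ := classes_mem.mp hC'
  have rij : KRel n P i j := rel_trans (rel_symm (mem_cls.mp hi)) (mem_cls.mp hj)
  have rkl : KRel n P k l := rel_trans (rel_symm (mem_cls.mp hk)) (mem_cls.mp hl)
  have hnik : ¬ KRel n P i k := by
    intro h
    exact hne (((cls_eq_of_rel (mem_cls.mp hi)).trans (cls_eq_of_rel h)).trans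
      (cls_eq_of_rel (mem_cls.mp hk)).symm)
  unfold KRel at hnik
  push_neg at hnik
  obtain ⟨B, hB, ⟨b1, hb1, a1⟩, b2, hb2, a2⟩ := hnik
  -- val order
  have hv1 : i.val < k.val := hik
  have hv2 : k.val < j.val := hkj
  have hv3 : j.val < l.val := hjl
  have li := i.isLt; have lk := k.isLt; have lj := j.isLt; have ll := l.isLt
  -- distances from base i
  have dk : DD n i k = k.val - i.val := by
    rcases DD_val i k with ⟨e1, e2⟩ | ⟨e1, e2⟩ <;> omega
  have dj : DD n i j = j.val - i.val := by
    rcases DD_val i j with ⟨e1, e2⟩ | ⟨e1, e2⟩ <;> omega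
  have dl : DD n i l = l.val - i.val := by
    rcases DD_val i l with ⟨e1, e2⟩ | ⟨e1, e2⟩ <;> omega
  have qi : DD n i i = 0 := DD_self i
  have a1' := (arc_base i b1).mp a1
  have a2' := (arc_base i b2).mp a2
  rw [qi] at a1' a2'
  have hb1' : 0 < DD n i b1 ∧ DD n i b1 ≤ DD n i k := by omega
  have hb2' : DD n i k < DD n i b2 ∨ DD n i b2 = 0 := by omega
  rcases le_or_gt (DD n i b2) (DD n i j) with hd | hd
  · rcases hb2' with hb2' | hb2'
    · -- q k < q b2 ≤ q j : contradict rkl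
      refine rkl B hB ⟨⟨b2, hb2, ?_⟩, ⟨b1, hb1, ?_⟩⟩
      · rw [arc_base i]; omega
      · rw [arc_base i]; omega
    · -- b2 = i : contradict rij with b1 ∈ (i,j], b2 ∈ (j,i]
      refine rij B hB ⟨⟨b1, hb1, ?_⟩, ⟨b2, hb2, ?_⟩⟩
      · rw [arc_base i]; omega
      · rw [arc_base i]; omega
  · -- q b2 > q j : contradict rij
    refine rij B hB ⟨⟨b1, hb1, ?_⟩, ⟨b2, hb2, ?_⟩⟩
    · rw [arc_base i]; omega
    · rw [arc_base i]; omega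

end ClassSec

section InterSec
variable {n : ℕ} [NeZero n]

lemma even_lt_even {a b : Fin n} (h : evenEmb n a < evenEmb n b) : a < b := by
  have : 2 * a.val < 2 * b.val := h
  exact (by omega : a.val < b.val)

lemma odd_lt_odd {a b : Fin n} (h : oddEmb n a < oddEmb n b) : a < b := by
  have : 2 * a.val + 1 < 2 * b.val + 1 := h
  exact (by omega : a.val < b.val)

lemma even_lt_odd {a b : Fin n} (h : evenEmb n a < oddEmb n b) : a.val ≤ b.val := by
  have : 2 * a.val < 2 * b.val + 1 := h
  omega

lemma odd_lt_even {a b : Fin n} (h : oddEmb n a < evenEmb n b) : a.val < b.val := by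
  have : 2 * a.val + 1 < 2 * b.val := h
  omega

lemma interleave_classes_nc {P : Finset (Finset (Fin n))} (hPnc : NonCrossing n P) :
    NonCrossing (2 * n) (interleave n P (classes n P)) := by
  intro B1 hB1 B2 hB2 hne x hx y hy z hz w hw hpat
  obtain ⟨hxz, hzy, hyw⟩ := hpat
  rcases Finset.mem_union.mp hB1 with h1 | h1 <;> rcases Finset.mem_union.mp hB2 with h2 | h2
  · -- even / even
    obtain ⟨A1, hA1, rfl⟩ := Finset.mem_image.mp h1
    obtain ⟨A2, hA2, rfl⟩ := Finset.mem_image.mp h2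
    obtain ⟨p1, hp1, rfl⟩ := Finset.mem_image.mp hx
    obtain ⟨q1, hq1, rfl⟩ := Finset.mem_image.mp hz
    obtain ⟨p2, hp2, rfl⟩ := Finset.mem_image.mp hy
    obtain ⟨q2, hq2, rfl⟩ := Finset.mem_image.mp hw
    have hA : A1 ≠ A2 := fun h => hne (by rw [h])
    exact hPnc A1 hA1 A2 hA2 hA p1 hp1 p2 hp2 q1 hq1 q2 hq2
      ⟨even_lt_even hxz, even_lt_even hzy, even_lt_even hyw⟩
  · -- even / odd
    obtain ⟨A1, hA1, rfl⟩ := Finset.mem_image.mp h1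
    obtain ⟨C2, hC2, rfl⟩ := Finset.mem_image.mp h2
    obtain ⟨c, rfl⟩ := classes_mem.mp hC2
    obtain ⟨p1, hp1, rfl⟩ := Finset.mem_image.mp hx
    obtain ⟨q1, hq1, rfl⟩ := Finset.mem_image.mp hz
    obtain ⟨p2, hp2, rfl⟩ := Finset.mem_image.mp hy
    obtain ⟨q2, hq2, rfl⟩ := Finset.mem_image.mp hw
    have hv1 : p1.val ≤ q1.val := even_lt_odd hxz
    have hv2 : q1.val < p2.val := odd_lt_even hzy
    have hv3 : p2.val ≤ q2.val := even_lt_odd hyw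
    have lp1 := p1.isLt; have lp2 := p2.isLt; have lq1 := q1.isLt; have lq2 := q2.isLt
    have rq : KRel n P q1 q2 := rel_trans (rel_symm (mem_cls.mp hq1)) (mem_cls.mp hq2)
    refine rq A1 hA1 ⟨⟨p2, hp2, ?_, ?_⟩, ⟨p1, hp1, ?_, ?_⟩⟩
    · rcases DD_val q1 p2 with ⟨e1, e2⟩ | ⟨e1, e2⟩ <;> omega
    · rcases DD_val q1 p2 with ⟨e1, e2⟩ | ⟨e1, e2⟩ <;>
        rcases DD_val q1 q2 with ⟨f1, f2⟩ | ⟨f1, f2⟩ <;> omega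
    · rcases DD_val q2 p1 with ⟨e1, e2⟩ | ⟨e1, e2⟩ <;> omega
    · rcases DD_val q2 p1 with ⟨e1, e2⟩ | ⟨e1, e2⟩ <;>
        rcases DD_val q2 q1 with ⟨f1, f2⟩ | ⟨f1, f2⟩ <;> omega
  · -- odd / even
    obtain ⟨C1, hC1, rfl⟩ := Finset.mem_image.mp h1
    obtain ⟨c, rfl⟩ := classes_mem.mp hC1
    obtain ⟨A2, hA2, rfl⟩ := Finset.mem_image.mp h2
    obtain ⟨q1, hq1, rfl⟩ := Finset.mem_image.mp hx
    obtain ⟨p1, hp1, rfl⟩ := Finset.mem_image.mp hz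
    obtain ⟨q2, hq2, rfl⟩ := Finset.mem_image.mp hy
    obtain ⟨p2, hp2, rfl⟩ := Finset.mem_image.mp hw
    have hv1 : q1.val < p1.val := odd_lt_even hxz
    have hv2 : p1.val ≤ q2.val := even_lt_odd hzy
    have hv3 : q2.val < p2.val := odd_lt_even hyw
    have lp1 := p1.isLt; have lp2 := p2.isLt; have lq1 := q1.isLt; have lq2 := q2.isLt
    have rq : KRel n P q1 q2 := rel_trans (rel_symm (mem_cls.mp hq1)) (mem_cls.mp hq2)
    refine rq A2 hA2 ⟨⟨p1, hp1, ?_, ?_⟩, ⟨p2, hp2, ?_, ?_⟩⟩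
    · rcases DD_val q1 p1 with ⟨e1, e2⟩ | ⟨e1, e2⟩ <;> omega
    · rcases DD_val q1 p1 with ⟨e1, e2⟩ | ⟨e1, e2⟩ <;>
        rcases DD_val q1 q2 with ⟨f1, f2⟩ | ⟨f1, f2⟩ <;> omega
    · rcases DD_val q2 p2 with ⟨e1, e2⟩ | ⟨e1, e2⟩ <;> omega
    · rcases DD_val q2 p2 with ⟨e1, e2⟩ | ⟨e1, e2⟩ <;>
        rcases DD_val q2 q1 with ⟨f1, f2⟩ | ⟨f1, f2⟩ <;> omega
  · -- odd / odd
    obtain ⟨C1, hC1, rfl⟩ := Finset.mem_image.mp h1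
    obtain ⟨C2, hC2, rfl⟩ := Finset.mem_image.mp h2
    obtain ⟨q1, hq1, rfl⟩ := Finset.mem_image.mp hx
    obtain ⟨p1, hp1, rfl⟩ := Finset.mem_image.mp hz
    obtain ⟨q2, hq2, rfl⟩ := Finset.mem_image.mp hy
    obtain ⟨p2, hp2, rfl⟩ := Finset.mem_image.mp hw
    have hC : C1 ≠ C2 := fun h => hne (by rw [h])
    exact classes_nc C1 hC1 C2 hC2 hC q1 hq1 q2 hq2 p1 hp1 p2 hp2
      ⟨odd_lt_odd hxz, odd_lt_odd hzy, odd_lt_odd hyw⟩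
end InterSec

section SameSec
variable {n : ℕ} [NeZero n]

lemma same_iff {P Q : Finset (Finset (Fin n))}
    (hP : IsNCPartition n P) (hQ : IsKreweras n P Q) (i j : Fin n) :
    (∃ C ∈ Q, i ∈ C ∧ j ∈ C) ↔ KRel n P i j := by
  constructor
  · rintro ⟨C, hC, hi, hj⟩
    intro B hB hcr
    obtain ⟨⟨p1, hp1, a11, a12⟩, ⟨p2, hp2, a21, a22⟩⟩ := hcr
    by_cases hij : i = j
    · subst hij; rw [DD_self] at a12; omega
    have hBo : B.image (evenEmb n) ∈ interleave n P Q :=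
      Finset.mem_union_left _ (Finset.mem_image_of_mem _ hB)
    have hCo : C.image (oddEmb n) ∈ interleave n P Q :=
      Finset.mem_union_right _ (Finset.mem_image_of_mem _ hC)
    have hne : C.image (oddEmb n) ≠ B.image (evenEmb n) := by
      intro h
      have hmem : oddEmb n i ∈ B.image (evenEmb n) := h ▸ Finset.mem_image_of_mem _ hi
      obtain ⟨x, _, hx⟩ := Finset.mem_image.mp hmem
      have : (2 : ℕ) * x.val = 2 * i.val + 1 := congrArg Fin.val hx
      omega
    have hp1i : i ≠ p1 := by
      intro h; rw [← h, DD_self] at a11; omega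
    have hij0 : 0 < DD n i j := by
      rcases Nat.eq_zero_or_pos (DD n i j) with h | h
      · exact absurd (DD_eq_zero_iff.mp h) hij
      · exact h
    have c1 : DD (2 * n) (oddEmb n i) (evenEmb n p1) = 2 * DD n i p1 - 1 :=
      DD_odd_even hp1i
    have c2 : DD (2 * n) (oddEmb n i) (oddEmb n j) = 2 * DD n i j := DD_odd_odd i j
    have hlt3 : DD (2 * n) (oddEmb n i) (oddEmb n j) <
        DD (2 * n) (oddEmb n i) (evenEmb n p2) := by
      by_cases hp2i : p2 = i
      · have c3 : DD (2 * n) (oddEmb n i) (evenEmb n p2) = 2 * n - 1 := by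
          rw [hp2i]; exact DD_odd_even_self i
        rw [c2, c3]
        have := DD_lt i j
        have hn := Nat.pos_of_ne_zero (NeZero.ne n)
        omega
      · have hp2i' : i ≠ p2 := fun h => hp2i h.symm
        rw [c2, DD_odd_even hp2i']
        have t1 := DD_tri i j p2
        have t2 := DD_tri i j i
        rw [DD_self] at t2
        have hne0 : DD n i p2 ≠ 0 := fun h => hp2i (DD_eq_zero_iff.mp h).symm
        have := DD_lt i p2
        omega
    exact cyc hQ.2.1 hCo hBo hne (Finset.mem_image_of_mem _ hi)
      (Finset.mem_image_of_mem _ hj) (Finset.mem_image_of_mem _ hp1)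
      (Finset.mem_image_of_mem _ hp2) (by rw [c1]; omega) (by rw [c1, c2]; omega) hlt3
  · intro hrel
    have hpart : IsNCPartition n (classes n P) :=
      ⟨classes_nonempty, classes_disjoint, classes_cover, classes_nc⟩
    obtain ⟨C0, hC0, hsubC⟩ := hQ.2.2 (classes n P) hpart
      (interleave_classes_nc hP.2.2.2) (cls n P i) (classes_mem.mpr ⟨i, rfl⟩)
    exact ⟨C0, hC0, hsubC (mem_cls.mpr (rel_refl P i)), hsubC (mem_cls.mpr hrel)⟩

end SameSec

section KeySec
variable {n : ℕ} [NeZero n]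

lemma keyL (h2 : 2 ≤ n) {P : Finset (Finset (Fin n))}
    (hNC : NonCrossing n P)
    (hdisj : ∀ B ∈ P, ∀ B' ∈ P, B ≠ B' → Disjoint B B')
    {A : Finset (Fin n)} (hA : A ∈ P) {u v : Fin n} (hu : u ∈ A) (hv : v ∈ A)
    (hspan : ∀ a ∈ A, DD n u a ≤ DD n u v) : KRel n P (u - 1) v := by
  intro B hB hcr
  obtain ⟨⟨b1, hb1, a1⟩, ⟨b2, hb2, a2⟩⟩ := hcr
  have hu1 : DD n u (u - 1) = n - 1 := by
    have h := DD_last h2 (u - 1)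
    rwa [sub_add_cancel] at h
  have a1' := (arc_base u b1).mp a1
  have a2' := (arc_base u b2).mp a2
  rw [hu1] at a1' a2'
  have l1 := DD_lt u v; have l2 := DD_lt u b1; have l3 := DD_lt u b2
  have hvv : DD n u b1 ≤ DD n u v ∧ DD n u v < n - 1 := by omega
  have hb2v : DD n u v < DD n u b2 := by omega
  by_cases hBA : B = A
  · subst hBA
    have := hspan b2 hb2
    omega
  · have hdb := Finset.disjoint_left.mp (hdisj B hB A hA hBA)
    have hb1A : b1 ∉ A := hdb hb1
    have hq1 : 0 < DD n u b1 := by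
      rcases Nat.eq_zero_or_pos (DD n u b1) with h | h
      · exact absurd ((DD_eq_zero_iff.mp h) ▸ hu) hb1A
      · exact h
    have hne1 : DD n u b1 ≠ DD n u v := fun h => hb1A (DD_inj h ▸ hv)
    exact cyc hNC hA hB (fun h => hBA h.symm) hu hv hb1 hb2 hq1 (by omega) hb2v

lemma final_iff {P Q : Finset (Finset (Fin n))}
    (hP : IsNCPartition n P) (hQ : IsKreweras n P Q) (i j : Fin n) :
    KRel n Q i j ↔ ∃ A ∈ P, i + 1 ∈ A ∧ j + 1 ∈ A := by
  by_cases hij : i = j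
  · subst hij
    constructor
    · intro _
      obtain ⟨A, hA, hA1⟩ := hP.2.2.1 (i + 1)
      exact ⟨A, hA, hA1, hA1⟩
    · intro _
      exact rel_refl Q i
  have h2 : 2 ≤ n := two_le_of_ne hij
  have hs1 : i + 1 ≠ j + 1 := fun h => hij (add_right_cancel h)
  have hqj : DD n (j + 1) j = n - 1 := DD_last h2 j
  have hqi1 : DD n (j + 1) (i + 1) = DD n (j + 1) i + 1 := DD_succ h2 hs1
  have hqs : DD n (j + 1) (j + 1) = 0 := DD_self _
  have hqine : DD n (j + 1) i ≠ n - 1 := fun h => hij (DD_inj (h.trans hqj.symm))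
  have lqi := DD_lt (j + 1) i
  constructor
  · intro hrel
    by_contra hno
    push_neg at hno
    obtain ⟨A, hA, hiA⟩ := hP.2.2.1 (i + 1)
    have hjA : j + 1 ∉ A := fun h => hno A hA hiA h
    obtain ⟨u, huA, humin⟩ :=
      Finset.exists_min_image A (fun x => DD n (j + 1) x) ⟨i + 1, hiA⟩
    obtain ⟨v, hvA, hvmax⟩ :=
      Finset.exists_max_image A (fun x => DD n (j + 1) x) ⟨i + 1, hiA⟩
    have hus : u ≠ j + 1 := fun h => hjA (h ▸ huA)
    have hqu : 0 < DD n (j + 1) u := by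
      rcases Nat.eq_zero_or_pos (DD n (j + 1) u) with h | h
      · exact absurd (DD_eq_zero_iff.mp h).symm hus
      · exact h
    have hqupred : DD n (j + 1) u = DD n (j + 1) (u - 1) + 1 := DD_pred h2 hus
    have hspan : ∀ a ∈ A, DD n u a ≤ DD n u v := by
      intro a ha
      have m1 := humin a ha
      have m2 := humin v hvA
      have m3 := hvmax a ha
      have t1 := DD_tri (j + 1) u a
      have t2 := DD_tri (j + 1) u v
      have l1 := DD_lt (j + 1) u; have l2 := DD_lt (j + 1) a
      have l3 := DD_lt (j + 1) v; have l4 := DD_lt u a; have l5 := DD_lt u v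
      rcases t1 with t1 | t1 <;> rcases t2 with t2 | t2 <;> omega
    have hrelP : KRel n P (u - 1) v := keyL h2 hP.2.2.2 hP.2.1 hA huA hvA hspan
    obtain ⟨C, hC, huC, hvC⟩ := (same_iff hP hQ (u - 1) v).mpr hrelP
    refine hrel C hC ⟨⟨v, hvC, ?_⟩, ⟨u - 1, huC, ?_⟩⟩
    · rw [arc_base (j + 1)]
      have m4 := hvmax (i + 1) hiA
      have l6 := DD_lt (j + 1) v
      omega
    · rw [arc_base (j + 1)]
      have m5 := humin (i + 1) hiA
      have l7 := DD_lt (j + 1) (u - 1)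
      omega
  · rintro ⟨A, hA, hiA, hjA⟩
    intro C hC hcr
    obtain ⟨⟨q1, hq1, a1⟩, ⟨q2, hq2, a2⟩⟩ := hcr
    have hrelq : KRel n P q1 q2 := (same_iff hP hQ q1 q2).mp ⟨C, hC, hq1, hq2⟩
    have a1' := (arc_base (j + 1) q1).mp a1
    have a2' := (arc_base (j + 1) q2).mp a2
    rw [hqj] at a1' a2'
    have lq1 := DD_lt (j + 1) q1; have lq2 := DD_lt (j + 1) q2
    refine hrelq A hA ⟨⟨j + 1, hjA, ?_⟩, ⟨i + 1, hiA, ?_⟩⟩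
    · rw [arc_base (j + 1), hqs]
      omega
    · rw [arc_base (j + 1), hqi1]
      omega

lemma part_sub {S T : Finset (Finset (Fin n))}
    (hSne : ∀ B ∈ S, B.Nonempty)
    (hSdis : ∀ B ∈ S, ∀ B' ∈ S, B ≠ B' → Disjoint B B')
    (hTdis : ∀ B ∈ T, ∀ B' ∈ T, B ≠ B' → Disjoint B B')
    (hTcov : ∀ i : Fin n, ∃ B ∈ T, i ∈ B)
    (h : ∀ i j : Fin n, (∃ B ∈ S, i ∈ B ∧ j ∈ B) ↔ (∃ B ∈ T, i ∈ B ∧ j ∈ B)) :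
    S ⊆ T := by
  intro B hB
  obtain ⟨i, hi⟩ := hSne B hB
  obtain ⟨C, hC, hiC⟩ := hTcov i
  have hBC : B = C := by
    ext x
    constructor
    · intro hx
      obtain ⟨C', hC', hiC', hxC'⟩ := (h i x).mp ⟨B, hB, hi, hx⟩
      rcases eq_or_ne C' C with rfl | hne
      · exact hxC'
      · exact absurd hiC (Finset.disjoint_left.mp (hTdis C' hC' C hC hne) hiC')
    · intro hx
      obtain ⟨B', hB', hiB', hxB'⟩ := (h i x).mpr ⟨C, hC, hiC, hx⟩
      rcases eq_or_ne B' B with rfl | hne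
      · exact hxB'
      · exact absurd hi (Finset.disjoint_left.mp (hSdis B' hB' B hB hne) hiB')
  exact hBC ▸ hC

lemma mem_rot {A : Finset (Fin n)} {i : Fin n} :
    i ∈ A.image (fun x : Fin n => x - 1) ↔ i + 1 ∈ A := by
  constructor
  · intro h
    obtain ⟨a, ha, rfl⟩ := Finset.mem_image.mp h
    rwa [sub_add_cancel]
  · intro h
    exact Finset.mem_image.mpr ⟨i + 1, h, by rw [add_sub_cancel_right]⟩

end KeySec

/-- Applying the Kreweras complement construction twice to a non-crossing partition
`P` of `[n]` yields `P` rotated once in the clockwise direction, i.e. each element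
`i` of each block is replaced by `i - 1` (cyclically). -/
theorem kreweras_squared (n : ℕ) [NeZero n] (P Q R : Finset (Finset (Fin n)))
    (hP : IsNCPartition n P) (hQ : IsKreweras n P Q) (hR : IsKreweras n Q R) :
    R = P.image (Finset.image (fun i : Fin n => i - 1)) := by
  obtain ⟨hRne, hRdis, hRcov, _⟩ := hR.1
  set T := P.image (Finset.image (fun i : Fin n => i - 1)) with hT
  have hTne : ∀ B ∈ T, B.Nonempty := by
    intro B hB
    obtain ⟨A, hA, rfl⟩ := Finset.mem_image.mp hB
    exact (hP.1 A hA).image _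
  have hTdis : ∀ B ∈ T, ∀ B' ∈ T, B ≠ B' → Disjoint B B' := by
    intro B hB B' hB' hne
    obtain ⟨A, hA, rfl⟩ := Finset.mem_image.mp hB
    obtain ⟨A', hA', rfl⟩ := Finset.mem_image.mp hB'
    have hAA : A ≠ A' := fun h => hne (by rw [h])
    rw [Finset.disjoint_left]
    intro x hx hx'
    exact Finset.disjoint_left.mp (hP.2.1 A hA A' hA' hAA) (mem_rot.mp hx) (mem_rot.mp hx')
  have hTcov : ∀ i : Fin n, ∃ B ∈ T, i ∈ B := by
    intro i
    obtain ⟨A, hA, hiA⟩ := hP.2.2.1 (i + 1)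
    exact ⟨A.image _, Finset.mem_image_of_mem _ hA, mem_rot.mpr hiA⟩
  have hsame : ∀ i j : Fin n, (∃ B ∈ R, i ∈ B ∧ j ∈ B) ↔ (∃ B ∈ T, i ∈ B ∧ j ∈ B) := by
    intro i j
    rw [show (∃ B ∈ R, i ∈ B ∧ j ∈ B) ↔ KRel n Q i j from same_iff hQ.1 hR i j,
      final_iff hP hQ i j]
    constructor
    · rintro ⟨A, hA, h1, h2⟩
      exact ⟨A.image _, Finset.mem_image_of_mem _ hA, mem_rot.mpr h1, mem_rot.mpr h2⟩
    · rintro ⟨B, hB, h1, h2⟩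
      obtain ⟨A, hA, rfl⟩ := Finset.mem_image.mp hB
      exact ⟨A, hA, mem_rot.mp h1, mem_rot.mp h2⟩
  exact Finset.Subset.antisymm
    (part_sub hRne hRdis hTdis hTcov hsame)
    (part_sub hTne hTdis hRdis hRcov (fun i j => (hsame i j).symm))
end

section
/- Let P and P' be non-crossing partitions of [n] with Z-decorations x = (x_1,...,x_n) and x' = (x'_1,...,x'_n) taking values in closed arcs [a_i, a_{i+1}] of a cyclically ordered set. Define min{x,x'} componentwise (taking minimum within [a_i, a_{i+1}]). Then min{x,x'} is a valid decoration of the meet P ∧ P': i.e., if i is a singleton of P ∧ P' then min{x_i,x'_i} may equal a_i, if i is an adjacency of P ∧ P' then min{x_i,x'_i} may equal a_{i+1}, and otherwise min{x_i,x'_i} lies strictly between a_i and a_{i+1}. -/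
/-- `{i}` is a block of `Q`. -/
def IsSingletonOf {n : ℕ} (Q : Finset (Finset (Fin n))) (i : Fin n) : Prop :=
  ({i} : Finset (Fin n)) ∈ Q

/-- `i` and `i + 1` (cyclically) lie in a common block of `Q`. -/
def IsAdjacencyOf {n : ℕ} [NeZero n] (Q : Finset (Finset (Fin n))) (i : Fin n) : Prop :=
  ∃ B ∈ Q, i ∈ B ∧ i + 1 ∈ B

/-- The common refinement of `P` and `Q`. -/
def ncMeet (n : ℕ) (P Q : Finset (Finset (Fin n))) : Finset (Finset (Fin n)) :=
  ((P ×ˢ Q).image fun p => p.1 ∩ p.2).filter fun B => B.Nonempty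

/-- `x` is a valid decoration of the non-crossing partition `P` of `[n]`:
each `x i` lies in the closed arc `[a_i, a_{i+1}]` (modelled by the interval
`[l i, r i]` in a linear order), with `x i = a_i` allowed only when `{i}` is a
singleton block and `x i = a_{i+1}` allowed only when `i` is an adjacency. -/
def IsDecoration {n : ℕ} [NeZero n] {α : Type*} [LinearOrder α]
    (l r : Fin n → α) (P : Finset (Finset (Fin n))) (x : Fin n → α) : Prop :=
  ∀ i : Fin n, x i ∈ Set.Icc (l i) (r i) ∧
    (x i = l i → IsSingletonOf P i) ∧
    (x i = r i → IsAdjacencyOf P i)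

lemma inter_mem_ncMeet {n : ℕ} {P Q : Finset (Finset (Fin n))} {B B' : Finset (Fin n)}
    (hB : B ∈ P) (hB' : B' ∈ Q) (hne : (B ∩ B').Nonempty) : B ∩ B' ∈ ncMeet n P Q := by
  simp only [ncMeet, Finset.mem_filter, Finset.mem_image, Finset.mem_product]
  exact ⟨⟨(B, B'), ⟨hB, hB'⟩, rfl⟩, hne⟩

lemma ncMeet_comm (n : ℕ) (P Q : Finset (Finset (Fin n))) : ncMeet n P Q = ncMeet n Q P := by
  ext C
  simp only [ncMeet, Finset.mem_filter, Finset.mem_image, Finset.mem_product, Prod.exists]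
  constructor <;> rintro ⟨⟨B, B', ⟨hB, hB'⟩, rfl⟩, hne⟩ <;>
    exact ⟨⟨B', B, ⟨hB', hB⟩, Finset.inter_comm _ _⟩, hne⟩

lemma IsSingletonOf.ncMeet_left {n : ℕ} {P Q : Finset (Finset (Fin n))} {i : Fin n}
    (hi : IsSingletonOf P i) (hQ : ∃ B ∈ Q, i ∈ B) : IsSingletonOf (ncMeet n P Q) i := by
  obtain ⟨B, hB, hiB⟩ := hQ
  have hinter : {i} ∩ B = {i} := Finset.singleton_inter_of_mem hiB
  have hmem := inter_mem_ncMeet hi hB (by rw [hinter]; exact Finset.singleton_nonempty i)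
  rwa [hinter] at hmem

lemma IsSingletonOf.ncMeet_right {n : ℕ} {P Q : Finset (Finset (Fin n))} {i : Fin n}
    (hi : IsSingletonOf Q i) (hP : ∃ B ∈ P, i ∈ B) : IsSingletonOf (ncMeet n P Q) i := by
  rw [ncMeet_comm]
  exact hi.ncMeet_left hP

lemma IsAdjacencyOf.ncMeet {n : ℕ} [NeZero n] {P Q : Finset (Finset (Fin n))} {i : Fin n}
    (hP : IsAdjacencyOf P i) (hQ : IsAdjacencyOf Q i) : IsAdjacencyOf (ncMeet n P Q) i := by
  obtain ⟨B, hB, hiB, hi1B⟩ := hP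
  obtain ⟨B', hB', hiB', hi1B'⟩ := hQ
  have hi : i ∈ B ∩ B' := Finset.mem_inter.mpr ⟨hiB, hiB'⟩
  exact ⟨B ∩ B', inter_mem_ncMeet hB hB' ⟨i, hi⟩, hi, Finset.mem_inter.mpr ⟨hi1B, hi1B'⟩⟩

lemma eq_of_min_eq_of_le_left {α : Type*} [LinearOrder α] {a b c : α}
    (h : min a b = c) (ha : a ≤ c) : a = c :=
  le_antisymm ha (h ▸ min_le_left a b)

lemma eq_of_min_eq_of_le_right {α : Type*} [LinearOrder α] {a b c : α}
    (h : min a b = c) (hb : b ≤ c) : b = c :=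
  le_antisymm hb (h ▸ min_le_right a b)

theorem min_decoration_of_meet_general (n : ℕ) [NeZero n] {α : Type*} [LinearOrder α]
    (l r : Fin n → α)
    (P P' : Finset (Finset (Fin n))) (hP : IsNCPartition n P) (hP' : IsNCPartition n P')
    (x x' : Fin n → α) (hx : IsDecoration l r P x) (hx' : IsDecoration l r P' x') :
    IsDecoration l r (ncMeet n P P') (fun i => min (x i) (x' i)) := by
  intro i
  obtain ⟨⟨hl, hr⟩, hsing, hadj⟩ := hx i
  obtain ⟨⟨hl', hr'⟩, hsing', hadj'⟩ := hx' i
  refine ⟨⟨le_min hl hl', min_le_of_left_le hr⟩, fun hmin => ?_, fun hmin => ?_⟩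
  · rcases min_choice (x i) (x' i) with h | h
    · exact (hsing (h ▸ hmin)).ncMeet_left (hP'.2.2.1 i)
    · exact (hsing' (h ▸ hmin)).ncMeet_right (hP.2.2.1 i)
  · exact (hadj (eq_of_min_eq_of_le_left hmin hr)).ncMeet
      (hadj' (eq_of_min_eq_of_le_right hmin hr'))

/-- If `x` is a decoration of the non-crossing partition `P` and `x'` is a
decoration of `P'`, then the componentwise minimum `min{x, x'}` (taken within each
closed arc `[a_i, a_{i+1}]`) is a valid decoration of the meet `P ∧ P'`. -/
theorem min_decoration_of_meet (n : ℕ) [NeZero n] {α : Type*} [LinearOrder α]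
    (l r : Fin n → α) (hlr : ∀ i, l i < r i)
    (P P' : Finset (Finset (Fin n))) (hP : IsNCPartition n P) (hP' : IsNCPartition n P')
    (x x' : Fin n → α) (hx : IsDecoration l r P x) (hx' : IsDecoration l r P' x') :
    IsDecoration l r (ncMeet n P P') (fun i => min (x i) (x' i)) :=
  min_decoration_of_meet_general n l r P P' hP hP' x x' hx hx'
end

section
/- Let T be a triangulated category whose t-structures form a lattice under inclusion of aisles. Then the induced order on equivalence classes of t-structures (where (X,Y) ~ (X',Y') iff Σ^N X ⊆ X' ⊆ Σ^{-N} X for some N > 0) is also a lattice, with meet of equivalence classes given by the class of the meet of any representatives. -/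
open CategoryTheory Limits Pretriangulated

variable (C : Type*) [Category C] [Preadditive C] [HasZeroObject C] [HasShift C ℤ]
  [∀ n : ℤ, Functor.Additive (shiftFunctor C n)] [Pretriangulated C]

/-- A t-structure on a triangulated category, following the definition in the paper:
a pair of full subcategories (given by their classes of objects), closed under direct
summands (retracts), with no nonzero morphisms from the aisle to the coaisle,
approximation triangles for every object, and aisle closed under suspension. -/
structure PaperTStructure where
  /-- The aisle. -/
  aisle : Set C
  /-- The coaisle. -/
  coaisle : Set C
  /-- The aisle is closed under direct summands (retracts). -/
  aisle_retract : ∀ x ∈ aisle, ∀ a : C, ∀ (s : a ⟶ x) (p : x ⟶ a), s ≫ p = 𝟙 a → a ∈ aisle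
  /-- The coaisle is closed under direct summands (retracts). -/
  coaisle_retract : ∀ y ∈ coaisle, ∀ a : C, ∀ (s : a ⟶ y) (p : y ⟶ a), s ≫ p = 𝟙 a → a ∈ coaisle
  /-- Every morphism from the aisle to the coaisle vanishes. -/
  hom_zero : ∀ x ∈ aisle, ∀ y ∈ coaisle, ∀ f : x ⟶ y, f = 0
  /-- Every object fits into an approximation triangle. -/
  exists_triangle : ∀ t : C, ∃ x ∈ aisle, ∃ y ∈ coaisle,
    ∃ (f : x ⟶ t) (g : t ⟶ y) (h : y ⟶ x⟦(1 : ℤ)⟧), Triangle.mk f g h ∈ distTriang C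
  /-- The aisle is closed under suspension. -/
  aisle_shift : ∀ x ∈ aisle, x⟦(1 : ℤ)⟧ ∈ aisle

variable {C}

/-- Neeman equivalence of t-structures: `Σ^N X ⊆ X' ⊆ Σ^{-N} X` for some `N > 0`,
i.e. the `N`-th suspension of each aisle is contained in the other aisle. -/
def TEquiv (T T' : PaperTStructure C) : Prop :=
  ∃ N : ℤ, 0 < N ∧ (∀ x ∈ T.aisle, x⟦N⟧ ∈ T'.aisle) ∧
    (∀ x ∈ T'.aisle, x⟦N⟧ ∈ T.aisle)

/-- The order induced on Neeman equivalence classes of t-structures by inclusion of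
aisles: `[T] ≤ [T']` iff every representative of `[T]` has its aisle contained in
the aisle of some representative of `[T']`. -/
def ClsLE (T T' : PaperTStructure C) : Prop :=
  ∀ S : PaperTStructure C, TEquiv S T →
    ∃ S' : PaperTStructure C, TEquiv S' T' ∧ S.aisle ⊆ S'.aisle

namespace PaperTStructure

lemma mem_aisle_of_iso (T : PaperTStructure C) {x y : C} (e : x ≅ y) (hx : x ∈ T.aisle) :
    y ∈ T.aisle :=
  T.aisle_retract x hx y e.inv e.hom (by simp)

lemma mem_coaisle_of_iso (T : PaperTStructure C) {x y : C} (e : x ≅ y) (hx : x ∈ T.coaisle) :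
    y ∈ T.coaisle :=
  T.coaisle_retract x hx y e.inv e.hom (by simp)

lemma shift_nonneg (T : PaperTStructure C) {k : ℤ} (hk : 0 ≤ k) {x : C} (hx : x ∈ T.aisle) :
    x⟦k⟧ ∈ T.aisle := by
  obtain ⟨n, rfl⟩ := Int.eq_ofNat_of_zero_le hk
  clear hk
  induction n with
  | zero => exact T.mem_aisle_of_iso (shiftZero ℤ x).symm hx
  | succ n ih =>
      rw [show ((n + 1 : ℕ) : ℤ) = (n : ℤ) + 1 by push_cast; ring]
      exact T.mem_aisle_of_iso (shiftAdd x (n : ℤ) 1).symm (T.aisle_shift _ ih)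

lemma shift_le (T : PaperTStructure C) {a b : ℤ} (h : a ≤ b) {x : C}
    (hx : x⟦a⟧ ∈ T.aisle) : x⟦b⟧ ∈ T.aisle := by
  obtain ⟨k, hk0, rfl⟩ : ∃ k, 0 ≤ k ∧ b = a + k := ⟨b - a, by omega, by omega⟩
  exact T.mem_aisle_of_iso (shiftAdd x a k).symm (T.shift_nonneg hk0 hx)

lemma dist_aux_shiftT (Δ : Triangle C) (hΔ : Δ ∈ distTriang C) {t : C} (e : Δ.obj₂ ≅ t) :
    Triangle.mk (Δ.mor₁ ≫ e.hom) (e.inv ≫ Δ.mor₂) Δ.mor₃ ∈ distTriang C := by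
  refine isomorphic_distinguished _ hΔ _ ?_
  exact Triangle.isoMk _ _ (Iso.refl _) e.symm (Iso.refl _)
    ((Category.assoc _ _ _).trans ((congrArg (Δ.mor₁ ≫ ·) e.hom_inv_id).trans
      ((Category.comp_id _).trans (Category.id_comp _).symm)))
    (Category.comp_id _)
    ((congrArg (Δ.mor₃ ≫ ·) (CategoryTheory.Functor.map_id _ _)).trans
      ((Category.comp_id _).trans (Category.id_comp _).symm))

/-- The t-structure obtained by shifting a t-structure by `n`. -/
def shiftT (T : PaperTStructure C) (n : ℤ) : PaperTStructure C where
  aisle := {x | x⟦n⟧ ∈ T.aisle}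
  coaisle := {y | y⟦n⟧ ∈ T.coaisle}
  aisle_retract := by
    intro x hx a s p hsp
    exact T.aisle_retract _ hx _ ((shiftFunctor C n).map s) ((shiftFunctor C n).map p)
      (by rw [← (shiftFunctor C n).map_comp, hsp, (shiftFunctor C n).map_id])
  coaisle_retract := by
    intro x hx a s p hsp
    exact T.coaisle_retract _ hx _ ((shiftFunctor C n).map s) ((shiftFunctor C n).map p)
      (by rw [← (shiftFunctor C n).map_comp, hsp, (shiftFunctor C n).map_id])
  hom_zero := by
    intro x hx y hy f
    have := T.hom_zero _ hx _ hy ((shiftFunctor C n).map f)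
    exact (shiftFunctor C n).map_injective (by simpa using this)
  exists_triangle := by
    intro t
    obtain ⟨x, hx, y, hy, f, g, h, mem⟩ := T.exists_triangle (t⟦n⟧)
    let Δ := (Triangle.shiftFunctor C (-n)).obj (Triangle.mk f g h)
    let e := (shiftEquiv C n).unitIso.symm.app t
    have hT' : Triangle.mk (Δ.mor₁ ≫ e.hom) (e.inv ≫ Δ.mor₂) Δ.mor₃ ∈ distTriang C :=
      dist_aux_shiftT _ (Triangle.shift_distinguished _ mem (-n)) e
    refine ⟨x⟦-n⟧, ?_, y⟦-n⟧, ?_, _, _, _, hT'⟩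
    · exact T.mem_aisle_of_iso (shiftNegShift x n).symm hx
    · exact T.mem_coaisle_of_iso (shiftNegShift y n).symm hy
  aisle_shift := by
    intro x hx
    exact T.mem_aisle_of_iso (shiftComm x n 1) (T.aisle_shift _ hx)

lemma tequiv_refl (T : PaperTStructure C) : TEquiv T T :=
  ⟨1, one_pos, fun x hx => T.aisle_shift x hx, fun x hx => T.aisle_shift x hx⟩

lemma tequiv_shiftT (T : PaperTStructure C) (n : ℤ) : TEquiv (T.shiftT n) T := by
  refine ⟨|n| + 1, by positivity, ?_, ?_⟩
  · intro x hx
    exact T.shift_le (by have := le_abs_self n; omega) hx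
  · intro x hx
    exact T.mem_aisle_of_iso (shiftAdd x (|n| + 1) n)
      (T.shift_le (by have := neg_abs_le n; omega) (T.mem_aisle_of_iso (shiftZero ℤ x).symm hx))

lemma shiftT_neg_le {T A : PaperTStructure C} (M : ℤ)
    (h : ∀ x ∈ T.aisle, x⟦M⟧ ∈ A.aisle) : (T.shiftT (-M)).aisle ⊆ A.aisle :=
  fun z hz => A.mem_aisle_of_iso (shiftNegShift z M) (h _ hz)

lemma mem_shiftT_neg (T : PaperTStructure C) (M : ℤ) {x : C} (hx : x ∈ T.aisle) :
    x⟦M⟧ ∈ (T.shiftT (-M)).aisle :=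
  T.mem_aisle_of_iso (shiftShiftNeg x M).symm hx

end PaperTStructure

open PaperTStructure

/-- Suppose the t-structures on a triangulated category form a lattice under
inclusion of aisles, with meet `m` and join `j`.  Then the induced order on Neeman
equivalence classes of t-structures is also a lattice: the meet (resp. join) of two
equivalence classes is well defined on representatives and is the greatest lower
bound (resp. least upper bound) of the classes; it is given by the class of the
meet (resp. join) of any representatives. -/
theorem cls_lattice (m j : PaperTStructure C → PaperTStructure C → PaperTStructure C)
    (hm : ∀ T T' : PaperTStructure C, (m T T').aisle ⊆ T.aisle ∧ (m T T').aisle ⊆ T'.aisle ∧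
      ∀ R : PaperTStructure C, R.aisle ⊆ T.aisle → R.aisle ⊆ T'.aisle →
        R.aisle ⊆ (m T T').aisle)
    (hj : ∀ T T' : PaperTStructure C, T.aisle ⊆ (j T T').aisle ∧ T'.aisle ⊆ (j T T').aisle ∧
      ∀ R : PaperTStructure C, T.aisle ⊆ R.aisle → T'.aisle ⊆ R.aisle →
        (j T T').aisle ⊆ R.aisle) :
    (∀ T T' S S' : PaperTStructure C, TEquiv T S → TEquiv T' S' →
      TEquiv (m T T') (m S S') ∧ TEquiv (j T T') (j S S')) ∧
    (∀ T T' : PaperTStructure C,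
      ClsLE (m T T') T ∧ ClsLE (m T T') T' ∧
        ∀ R : PaperTStructure C, ClsLE R T → ClsLE R T' → ClsLE R (m T T')) ∧
    (∀ T T' : PaperTStructure C,
      ClsLE T (j T T') ∧ ClsLE T' (j T T') ∧
        ∀ R : PaperTStructure C, ClsLE T R → ClsLE T' R → ClsLE (j T T') R) := by
  have meetkey : ∀ (T T' S S' : PaperTStructure C) (M : ℤ)
      (hTS : ∀ x ∈ T.aisle, x⟦M⟧ ∈ S.aisle) (hT'S' : ∀ x ∈ T'.aisle, x⟦M⟧ ∈ S'.aisle),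
      ∀ x ∈ (m T T').aisle, x⟦M⟧ ∈ (m S S').aisle := by
    intro T T' S S' M hTS hT'S' x hx
    exact (hm S S').2.2 ((m T T').shiftT (-M))
      (shiftT_neg_le M (fun z hz => hTS z ((hm T T').1 hz)))
      (shiftT_neg_le M (fun z hz => hT'S' z ((hm T T').2.1 hz)))
      (mem_shiftT_neg _ M hx)
  have joinkey : ∀ (T T' S S' : PaperTStructure C) (M : ℤ)
      (hTS : ∀ x ∈ T.aisle, x⟦M⟧ ∈ S.aisle) (hT'S' : ∀ x ∈ T'.aisle, x⟦M⟧ ∈ S'.aisle),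
      ∀ x ∈ (j T T').aisle, x⟦M⟧ ∈ (j S S').aisle := by
    intro T T' S S' M hTS hT'S' x hx
    exact (hj T T').2.2 ((j S S').shiftT M)
      (fun z hz => (hj S S').1 (hTS z hz))
      (fun z hz => (hj S S').2.1 (hT'S' z hz)) hx
  refine ⟨?_, ?_, ?_⟩
  · rintro T T' S S' ⟨N₁, hN₁, h₁, h₁'⟩ ⟨N₂, hN₂, h₂, h₂'⟩
    set M := max N₁ N₂ with hM
    have hTS : ∀ x ∈ T.aisle, x⟦M⟧ ∈ S.aisle :=
      fun x hx => S.shift_le (le_max_left _ _) (h₁ x hx)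
    have hST : ∀ x ∈ S.aisle, x⟦M⟧ ∈ T.aisle :=
      fun x hx => T.shift_le (le_max_left _ _) (h₁' x hx)
    have hT'S' : ∀ x ∈ T'.aisle, x⟦M⟧ ∈ S'.aisle :=
      fun x hx => S'.shift_le (le_max_right _ _) (h₂ x hx)
    have hS'T' : ∀ x ∈ S'.aisle, x⟦M⟧ ∈ T'.aisle :=
      fun x hx => T'.shift_le (le_max_right _ _) (h₂' x hx)
    have hMpos : 0 < M := lt_max_of_lt_left hN₁
    exact ⟨⟨M, hMpos, meetkey T T' S S' M hTS hT'S', meetkey S S' T T' M hST hS'T'⟩,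
      ⟨M, hMpos, joinkey T T' S S' M hTS hT'S', joinkey S S' T T' M hST hS'T'⟩⟩
  · intro T T'
    refine ⟨?_, ?_, ?_⟩
    · rintro S ⟨N, hN, h1, h2⟩
      exact ⟨T.shiftT N, T.tequiv_shiftT N, fun x hx => (hm T T').1 (h1 x hx)⟩
    · rintro S ⟨N, hN, h1, h2⟩
      exact ⟨T'.shiftT N, T'.tequiv_shiftT N, fun x hx => (hm T T').2.1 (h1 x hx)⟩
    · intro R hRT hRT' S hSR
      obtain ⟨S₁, ⟨N₁, hN₁, e₁, -⟩, hs₁⟩ := hRT S hSR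
      obtain ⟨S₂, ⟨N₂, hN₂, e₂, -⟩, hs₂⟩ := hRT' S hSR
      set M := max N₁ N₂ with hM
      have c₁ : ∀ x ∈ S.aisle, x⟦M⟧ ∈ T.aisle :=
        fun x hx => T.shift_le (le_max_left _ _) (e₁ x (hs₁ hx))
      have c₂ : ∀ x ∈ S.aisle, x⟦M⟧ ∈ T'.aisle :=
        fun x hx => T'.shift_le (le_max_right _ _) (e₂ x (hs₂ hx))
      refine ⟨(m T T').shiftT M, (m T T').tequiv_shiftT M, fun x hx => ?_⟩
      exact (hm T T').2.2 (S.shiftT (-M)) (shiftT_neg_le M c₁) (shiftT_neg_le M c₂)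
        (mem_shiftT_neg S M hx)
  · intro T T'
    refine ⟨?_, ?_, ?_⟩
    · rintro S ⟨N, hN, h1, h2⟩
      exact ⟨(j T T').shiftT N, (j T T').tequiv_shiftT N, fun x hx => (hj T T').1 (h1 x hx)⟩
    · rintro S ⟨N, hN, h1, h2⟩
      exact ⟨(j T T').shiftT N, (j T T').tequiv_shiftT N, fun x hx => (hj T T').2.1 (h1 x hx)⟩
    · rintro R hTR hT'R S ⟨N, hN, h1, h2⟩
      obtain ⟨S₁, ⟨N₁, hN₁, e₁, -⟩, hs₁⟩ := hTR T (tequiv_refl T)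
      obtain ⟨S₂, ⟨N₂, hN₂, e₂, -⟩, hs₂⟩ := hT'R T' (tequiv_refl T')
      set M := max N₁ N₂ with hM
      have hT : T.aisle ⊆ (R.shiftT M).aisle :=
        fun x hx => R.shift_le (le_max_left _ _) (e₁ x (hs₁ hx))
      have hT' : T'.aisle ⊆ (R.shiftT M).aisle :=
        fun x hx => R.shift_le (le_max_right _ _) (e₂ x (hs₂ hx))
      have hjle : (j T T').aisle ⊆ (R.shiftT M).aisle := (hj T T').2.2 _ hT hT'
      refine ⟨R.shiftT (N + M), R.tequiv_shiftT (N + M), fun x hx => ?_⟩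
      exact R.mem_aisle_of_iso (shiftAdd x N M).symm (hjle (h1 x hx))
end

section
/- The map sending a subset S of indices and an equivalence relation on S arising from 'being connected by an arc' to a set of blocks, as in the paper, is well-defined: if X is a set of arcs of an admissible Z closed under clockwise rotation, shifts in both directions, and the Ptolemy condition, then the relation on {i : some arc of X has an endpoint in (a_i,a_{i+1})} defined by i ~ j iff some arc of X has one endpoint in (a_i,a_{i+1}) and the other in (a_j,a_{j+1}) is an equivalence relation, and the resulting partition of the subset is non-crossing. -/
/-- The unit circle, modelled as `ℝ/ℤ` with its circular (anticlockwise) order. -/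
abbrev Circ : Type := AddCircle (1 : ℝ)

/-- `Z` is admissible: a discrete infinite subset of the circle whose set of limit
points `closure Z \ Z` is finite and non-empty, every limit point being two-sided. -/
structure Admissible (Z : Set Circ) : Prop where
  infinite : Z.Infinite
  discrete : ∀ z ∈ Z, ∃ U ∈ nhds z, U ∩ Z = {z}
  limitPoints_finite : (closure Z \ Z).Finite
  limitPoints_nonempty : (closure Z \ Z).Nonempty
  two_sided : ∀ a ∈ closure Z \ Z, ∀ b : Circ, b ≠ a →
    (∃ z ∈ Z, sbtw a z b) ∧ (∃ z ∈ Z, sbtw b z a)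

/-- `pred` assigns to every point of `Z` its immediate predecessor in `Z`. -/
def IsPredFun (Z : Set Circ) (pred : Circ → Circ) : Prop :=
  ∀ z ∈ Z, pred z ∈ Z ∧ pred z ≠ z ∧ ∀ w ∈ Z, ¬sbtw (pred z) w z

/-- `succ` assigns to every point of `Z` its immediate successor in `Z`. -/
def IsSuccFun (Z : Set Circ) (succ : Circ → Circ) : Prop :=
  ∀ z ∈ Z, succ z ∈ Z ∧ succ z ≠ z ∧ ∀ w ∈ Z, ¬sbtw z w (succ z)

/-- `{x, y}` is an arc of `Z`: a pair of distinct, non-neighbouring points of `Z`. -/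
def IsArc (Z : Set Circ) (pred succ : Circ → Circ) (x y : Circ) : Prop :=
  x ∈ Z ∧ y ∈ Z ∧ y ≠ x ∧ y ≠ pred x ∧ y ≠ succ x

/-- The arcs `{y₀, y₁}` and `{y₀', y₁'}` cross: their endpoints interleave in the
cyclic order. -/
def Cross (y₀ y₁ y₀' y₁' : Circ) : Prop :=
  sbtw y₀ y₀' y₁ ∧ sbtw y₁ y₁' y₀

/-- `X` is closed under clockwise rotation. -/
def ClosedCW (X : Circ → Circ → Prop) (pred : Circ → Circ) : Prop :=
  ∀ x y, X x y → X (pred x) (pred y)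

/-- `X` satisfies the Ptolemy condition: whenever two arcs of `X` cross, every arc
with both endpoints among their four endpoints lies in `X`. -/
def PTO (Z : Set Circ) (pred succ : Circ → Circ) (X : Circ → Circ → Prop) : Prop :=
  ∀ y₀ y₁ y₀' y₁', X y₀ y₁ → X y₀' y₁' → Cross y₀ y₁ y₀' y₁' →
    ∀ a b, a ∈ ({y₀, y₁, y₀', y₁'} : Set Circ) → b ∈ ({y₀, y₁, y₀', y₁'} : Set Circ) →
      IsArc Z pred succ a b → X a b

/-- The open interval (arc) of the circle between `a` and `b` (anticlockwise). -/
def arcInterval (a b : Circ) : Set Circ := {s : Circ | sbtw a s b}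

/-- `X` is closed under anticlockwise rotation. -/
def ClosedCCW (X : Circ → Circ → Prop) (succ : Circ → Circ) : Prop :=
  ∀ x y, X x y → X (succ x) (succ y)

/-- The relation on indices of limit-intervals: `i ~ j` iff some arc of `X` has one
endpoint in `(a_i, a_{i+1})` and the other in `(a_j, a_{j+1})`. -/
def ArcRel (n : ℕ) [NeZero n] (a : Fin n → Circ) (X : Circ → Circ → Prop)
    (i j : Fin n) : Prop :=
  ∃ x y, X x y ∧ x ∈ arcInterval (a i) (a (i + 1)) ∧ y ∈ arcInterval (a j) (a (j + 1))

open Set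

noncomputable def emb (c : ℝ) (s : Circ) : ℝ := (AddCircle.equivIoc 1 c s : ℝ)

lemma emb_mem (c : ℝ) (s : Circ) : emb c s ∈ Ioc c (c + 1) := (AddCircle.equivIoc 1 c s).2

lemma coe_emb (c : ℝ) (s : Circ) : ((emb c s : ℝ) : Circ) = s :=
  (AddCircle.equivIoc 1 c).symm_apply_apply s

lemma emb_inj {c : ℝ} {s t : Circ} (h : emb c s = emb c t) : s = t := by
  have := congrArg (fun x : ℝ => (x : Circ)) h
  simpa [coe_emb] using this

def wcyc (x y z : ℝ) : Prop := (x ≤ y ∧ y ≤ z) ∨ (y ≤ z ∧ z ≤ x) ∨ (z ≤ x ∧ x ≤ y)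
def scyc (x y z : ℝ) : Prop := (x < y ∧ y < z) ∨ (y < z ∧ z < x) ∨ (z < x ∧ x < y)

lemma btw_coe {c x y z : ℝ} (hx : x ∈ Ioc c (c + 1)) (hy : y ∈ Ioc c (c + 1))
    (hz : z ∈ Ioc c (c + 1)) : btw (x : Circ) (y : Circ) (z : Circ) ↔ wcyc x y z := by
  rw [QuotientAddGroup.btw_coe_iff]
  have h1 : toIcoMod (one_pos) x y = if x ≤ y then y else y + 1 := by
    split_ifs with h
    · exact (toIcoMod_eq_self one_pos).2 ⟨h, by cases hx; cases hy; linarith⟩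
    · rw [← toIcoMod_add_right, (toIcoMod_eq_self one_pos).2]
      constructor <;> cases hx <;> cases hy <;> linarith
  have h2 : toIocMod (one_pos) x z = if x < z then z else z + 1 := by
    split_ifs with h
    · exact (toIocMod_eq_self one_pos).2 ⟨h, by cases hx; cases hz; linarith⟩
    · rw [← toIocMod_add_right, (toIocMod_eq_self one_pos).2]
      constructor <;> cases hx <;> cases hz <;> linarith
  rw [h1, h2]
  unfold wcyc
  cases hx; cases hy; cases hz
  split_ifs with hxy hxz hxz <;> constructor <;> intro h <;>
    first
      | linarith
      | (rcases h with ⟨h1',h2'⟩|⟨h1',h2'⟩|⟨h1',h2'⟩ <;> linarith)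
      | (by_contra hc; push_neg at hc; rcases lt_trichotomy y z with h'|h'|h' <;>
          simp_all <;> linarith)

lemma scyc_iff (x y z : ℝ) : scyc x y z ↔ wcyc x y z ∧ ¬ wcyc z y x := by
  unfold wcyc scyc
  constructor
  · rintro (⟨h1,h2⟩|⟨h1,h2⟩|⟨h1,h2⟩) <;>
      refine ⟨by first
        | exact Or.inl ⟨h1.le, h2.le⟩
        | exact Or.inr (Or.inl ⟨h1.le, h2.le⟩)
        | exact Or.inr (Or.inr ⟨h1.le, h2.le⟩), ?_⟩ <;>
      · rintro (⟨g1,g2⟩|⟨g1,g2⟩|⟨g1,g2⟩) <;> linarith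
  · rintro ⟨hw, hn⟩
    push_neg at hn
    obtain ⟨n1, n2, n3⟩ := hn
    rcases hw with ⟨h1,h2⟩|⟨h1,h2⟩|⟨h1,h2⟩
    · refine Or.inl ⟨?_, n3 (h1.trans h2)⟩
      rcases h1.lt_or_eq with h|h
      · exact h
      · exact absurd (n2 h.ge) (by linarith)
    · refine Or.inr (Or.inl ⟨?_, ?_⟩)
      · rcases h1.lt_or_eq with h|h
        · exact h
        · exact absurd (n1 h.ge) (by linarith)
      · rcases h2.lt_or_eq with h|h
        · exact h
        · exact absurd (n2 (by linarith)) (by linarith)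
    · refine Or.inr (Or.inr ⟨?_, ?_⟩)
      · rcases h1.lt_or_eq with h|h
        · exact h
        · exact absurd (n3 h.ge) (by linarith)
      · rcases h2.lt_or_eq with h|h
        · exact h
        · exact absurd (n1 (by linarith)) (by linarith)

lemma sbtw_coe {c x y z : ℝ} (hx : x ∈ Ioc c (c + 1)) (hy : y ∈ Ioc c (c + 1))
    (hz : z ∈ Ioc c (c + 1)) : sbtw (x : Circ) (y : Circ) (z : Circ) ↔ scyc x y z := by
  rw [sbtw_iff_btw_not_btw, btw_coe hx hy hz, btw_coe hz hy hx, scyc_iff]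

lemma btw_emb (c : ℝ) (s t r : Circ) :
    btw s t r ↔ wcyc (emb c s) (emb c t) (emb c r) := by
  conv_lhs => rw [← coe_emb c s, ← coe_emb c t, ← coe_emb c r]
  exact btw_coe (emb_mem _ _) (emb_mem _ _) (emb_mem _ _)

lemma sbtw_emb (c : ℝ) (s t r : Circ) :
    sbtw s t r ↔ scyc (emb c s) (emb c t) (emb c r) := by
  conv_lhs => rw [← coe_emb c s, ← coe_emb c t, ← coe_emb c r]
  exact sbtw_coe (emb_mem _ _) (emb_mem _ _) (emb_mem _ _)

lemma emb_coe {c r : ℝ} (hr : r ∈ Ioc c (c + 1)) : emb c ((r : ℝ) : Circ) = r := by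
  have : (AddCircle.equivIoc 1 c) ((r : ℝ) : Circ) = ⟨r, hr⟩ := by
    rw [Equiv.apply_eq_iff_eq_symm_apply]; rfl
  simp [emb, this]

/-- The lift of `ℓ` with base cut at `ℓ` itself is the top endpoint. -/
lemma emb_self (ℓ : Circ) : emb (emb 0 ℓ - 1) ℓ = (emb 0 ℓ - 1) + 1 := by
  obtain ⟨c, hc⟩ : ∃ c, emb 0 ℓ - 1 = c := ⟨_, rfl⟩
  rw [hc]
  have h1 : ((c + 1 : ℝ) : Circ) = ℓ := by rw [← hc, sub_add_cancel, coe_emb]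
  calc emb c ℓ = emb c ((c + 1 : ℝ) : Circ) := by rw [h1]
    _ = c + 1 := emb_coe ⟨by linarith, le_rfl⟩

/-- For a limit point `ℓ` of `Z` and `z ∈ Z`, the predecessor lies strictly
between `ℓ` and `z`. -/
lemma sbtw_pred {Z : Set Circ} {pred : Circ → Circ} (hZ : Admissible Z)
    (hpred : IsPredFun Z pred) {ℓ z : Circ} (hℓ : ℓ ∈ closure Z \ Z) (hz : z ∈ Z) :
    sbtw ℓ (pred z) z := by
  have hzℓ : z ≠ ℓ := fun h => hℓ.2 (h ▸ hz)
  obtain ⟨z', hz', hsb⟩ := (hZ.two_sided ℓ hℓ z hzℓ).1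
  obtain ⟨hpZ, hpne, hpmax⟩ := hpred z hz
  set c : ℝ := emb 0 ℓ - 1 with hc
  have hℓc : emb c ℓ = c + 1 := emb_self ℓ
  rw [sbtw_emb c] at hsb ⊢
  rw [hℓc] at hsb ⊢
  have hbZ' := emb_mem c z'
  have hbW := emb_mem c z
  have hbP := emb_mem c (pred z)
  have h1 : emb c z' < emb c z ∧ emb c z < c + 1 := by
    rcases hsb with ⟨h1,h2⟩|⟨h1,h2⟩|⟨h1,h2⟩
    · exact absurd h1 (by cases hbZ'; linarith)
    · exact ⟨h1, h2⟩
    · exact absurd h2 (by cases hbZ'; linarith)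
  refine Or.inr (Or.inl ⟨?_, h1.2⟩)
  by_contra hle
  push_neg at hle
  have hne' : emb c z ≠ emb c (pred z) := fun h => hpne (emb_inj h.symm)
  have hlt : emb c z < emb c (pred z) := lt_of_le_of_ne hle hne'
  exact hpmax z' hz' ((sbtw_emb c _ _ _).2 (Or.inr (Or.inl ⟨h1.1, hlt⟩)))

lemma sbtw_succ {Z : Set Circ} {succ : Circ → Circ} (hZ : Admissible Z)
    (hsucc : IsSuccFun Z succ) {ℓ z : Circ} (hℓ : ℓ ∈ closure Z \ Z) (hz : z ∈ Z) :
    sbtw z (succ z) ℓ := by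
  have hzℓ : z ≠ ℓ := fun h => hℓ.2 (h ▸ hz)
  obtain ⟨z', hz', hsb⟩ := (hZ.two_sided ℓ hℓ z hzℓ).2
  obtain ⟨hsZ, hsne, hsmax⟩ := hsucc z hz
  set c : ℝ := emb 0 ℓ - 1 with hc
  have hℓc : emb c ℓ = c + 1 := emb_self ℓ
  rw [sbtw_emb c] at hsb ⊢
  rw [hℓc] at hsb ⊢
  have hbZ' := emb_mem c z'
  have hbW := emb_mem c z
  have hbS := emb_mem c (succ z)
  have h1 : emb c z < emb c z' ∧ emb c z' < c + 1 := by
    rcases hsb with ⟨h1,h2⟩|⟨h1,h2⟩|⟨h1,h2⟩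
    · exact ⟨h1, h2⟩
    · exact absurd h2 (by cases hbW; linarith)
    · exact absurd h1 (by cases hbW; linarith)
  have hSne : emb c (succ z) ≠ c + 1 := by
    intro h
    rw [← hℓc] at h
    exact hℓ.2 (emb_inj h ▸ hsZ)
  have hS1 : emb c (succ z) < c + 1 := lt_of_le_of_ne hbS.2 hSne
  refine Or.inl ⟨?_, hS1⟩
  by_contra hle
  push_neg at hle
  have hne' : emb c (succ z) ≠ emb c z := fun h => hsne (emb_inj h)
  have hlt : emb c (succ z) < emb c z := lt_of_le_of_ne hle hne'
  exact hsmax z' hz' ((sbtw_emb c _ _ _).2 (Or.inr (Or.inr ⟨hlt, h1.1⟩)))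

/-- The closed arc set `{s | btw y s u}` is closed. -/
lemma isClosed_btwSet (y u : Circ) : IsClosed {s : Circ | btw y s u} := by
  by_cases h : y = u
  · subst h
    have : {s : Circ | btw y s y} = univ := by
      ext s
      simp only [mem_setOf_eq, mem_univ, iff_true]
      exact (btw_total y s y).elim id id
    rw [this]; exact isClosed_univ
  · set Y : ℝ := emb 0 y with hY
    have hYy : ((Y : ℝ) : Circ) = y := coe_emb 0 y
    have hy' : emb Y y = Y + 1 := by
      conv_lhs => rw [← hYy]
      have h2 : ((Y : ℝ) : Circ) = ((Y + 1 : ℝ) : Circ) :=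
        (AddCircle.coe_add_period 1 Y).symm
      rw [h2]
      exact emb_coe ⟨by linarith, le_rfl⟩
    set U : ℝ := emb Y u with hU
    have hUmem := emb_mem Y u
    have hUlt : U < Y + 1 := by
      rcases hUmem.2.lt_or_eq with h'|h'
      · exact h'
      · exact absurd (emb_inj (hy'.trans (h'.symm.trans hU))) h
    have himg : {s : Circ | btw y s u} = (fun r : ℝ => (r : Circ)) '' Icc Y U := by
      ext s
      simp only [mem_setOf_eq, mem_image]
      constructor
      · intro hs
        rw [btw_emb Y, hy'] at hs
        have hsmem := emb_mem Y s
        rcases hs with ⟨h1,h2⟩|⟨h1,h2⟩|⟨h1,h2⟩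
        · exfalso
          have : emb Y s = Y + 1 := le_antisymm hsmem.2 h1
          rw [this] at h2; linarith
        · exact ⟨emb Y s, ⟨hsmem.1.le, h1⟩, coe_emb Y s⟩
        · have : emb Y s = Y + 1 := le_antisymm hsmem.2 h2
          refine ⟨Y, ⟨le_rfl, hUmem.1.le⟩, ?_⟩
          rw [hYy]
          exact (emb_inj (hy'.trans this.symm))
      · rintro ⟨r, ⟨hr1, hr2⟩, rfl⟩
        rcases hr1.lt_or_eq with h'|h'
        · rw [btw_emb Y, hy', emb_coe ⟨h', by linarith⟩]
          exact Or.inr (Or.inl ⟨hr2, by linarith⟩)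
        · have : ((r : ℝ) : Circ) = y := by rw [← h', hYy]
          rw [this]
          exact btw_rfl_left
    rw [himg]
    exact (isCompact_Icc.image (AddCircle.continuous_mk' 1)).isClosed

/-- Finiteness of the part of `Z` inside a closed arc avoiding all limit points. -/
lemma finite_inter_btw {Z : Set Circ} (hZ : Admissible Z) {y u : Circ}
    (hlim : ∀ ℓ ∈ closure Z \ Z, ¬ btw y ℓ u) :
    (Z ∩ {s | btw y s u}).Finite := by
  set S := Z ∩ {s | btw y s u} with hS
  have hclosed : IsClosed S := by
    have hsub : closure S ⊆ S := by
      intro t ht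
      have h1 : t ∈ closure Z := closure_mono inter_subset_left ht
      have h2 : t ∈ {s : Circ | btw y s u} := by
        have := closure_mono (inter_subset_right (s := Z)) ht
        rwa [(isClosed_btwSet y u).closure_eq] at this
      refine ⟨?_, h2⟩
      by_contra hzt
      exact hlim t ⟨h1, hzt⟩ h2
    exact isClosed_of_closure_subset hsub
  have hcompact : IsCompact S := hclosed.isCompact
  have hdisc : DiscreteTopology S := by
    rw [discreteTopology_subtype_iff]
    intro x hx
    obtain ⟨U, hU, hUZ⟩ := hZ.discrete x hx.1
    rw [← Filter.empty_mem_iff_bot]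
    have hU' : U \ {x} ∈ nhdsWithin x {x}ᶜ := diff_mem_nhdsWithin_compl hU {x}
    have hempty : (U \ {x}) ∩ S = ∅ := by
      apply eq_empty_of_subset_empty
      rintro t ⟨⟨htU, htx⟩, htZ, -⟩
      exact htx (by have : t ∈ U ∩ Z := ⟨htU, htZ⟩; rwa [hUZ] at this)
    exact hempty ▸ Filter.inter_mem_inf hU' (Filter.mem_principal_self S)
  exact hcompact.finite (isDiscrete_iff_discreteTopology.mpr hdisc)

lemma fin_add_one_val {n : ℕ} [NeZero n] (i : Fin n) :
    ((i + 1 : Fin n)).val = (i.val + 1) % n := by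
  rw [Fin.val_add, Fin.val_one']
  conv_rhs => rw [Nat.add_mod]
  conv_lhs => rw [Nat.add_mod]
  simp

lemma fin_add_one_eq_zero_iff {n : ℕ} [NeZero n] (i : Fin n) :
    i + 1 = 0 ↔ i.val + 1 = n := by
  rw [Fin.ext_iff, fin_add_one_val]
  have hlt := i.isLt
  have h0 : ((0 : Fin n)).val = 0 := rfl
  rw [h0]
  constructor
  · intro h
    have hd : n ∣ i.val + 1 := Nat.dvd_of_mod_eq_zero h
    have := Nat.le_of_dvd (Nat.succ_pos _) hd
    omega
  · intro h
    rw [h, Nat.mod_self]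

lemma fin_add_one_val_of_ne {n : ℕ} [NeZero n] {i : Fin n} (h : i + 1 ≠ 0) :
    ((i + 1 : Fin n)).val = i.val + 1 := by
  rw [fin_add_one_val]
  have h1 : ¬ (i.val + 1 = n) := fun hh => h ((fin_add_one_eq_zero_iff i).2 hh)
  have := i.isLt
  exact Nat.mod_eq_of_lt (by omega)

lemma fin_pos_of_ne_zero {n : ℕ} [NeZero n] {i : Fin n} (h : i ≠ 0) : (0 : Fin n) < i := by
  rw [Fin.lt_def]
  exact Nat.pos_of_ne_zero (fun hv => h (Fin.ext hv))

/-- Let `Z` be admissible with limit points `a 1 < ... < a n` and let `X` be a set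
of arcs of `Z` closed under rotation in both directions and satisfying the Ptolemy
condition.  Then the relation `i ~ j` iff some arc of `X` has one endpoint in
`(a_i, a_{i+1})` and the other in `(a_j, a_{j+1})` is an equivalence relation on the
set `{i : some arc of X has an endpoint in (a_i, a_{i+1})}`, and the resulting
partition of this subset of `[n]` into equivalence classes is non-crossing. -/
theorem arcRel_equivalence_noncrossing (n : ℕ) [NeZero n] (Z : Set Circ)
    (hZ : Admissible Z)
    (pred succ : Circ → Circ) (hpred : IsPredFun Z pred) (hsucc : IsSuccFun Z succ)
    (a : Fin n → Circ)
    (ha : ∀ i, a i ∈ closure Z \ Z)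
    (haAll : closure Z \ Z = Set.range a)
    (hacyc : ∀ i j k : Fin n, i < j → j < k → sbtw (a i) (a j) (a k))
    (X : Circ → Circ → Prop)
    (hXsym : ∀ x y, X x y → X y x)
    (hXarc : ∀ x y, X x y → IsArc Z pred succ x y)
    (hXcw : ClosedCW X pred) (hXccw : ClosedCCW X succ)
    (hXpto : PTO Z pred succ X) :
    (∀ i j, ArcRel n a X i j → ArcRel n a X j i) ∧
    (∀ i, (∃ x y, X x y ∧ x ∈ arcInterval (a i) (a (i + 1))) → ArcRel n a X i i) ∧
    (∀ i j k, ArcRel n a X i j → ArcRel n a X j k → ArcRel n a X i k) ∧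
    (∀ i k j l : Fin n, i < k → k < j → j < l →
      ArcRel n a X i j → ArcRel n a X k l → ArcRel n a X i k) := by
  classical
  have hsym : ∀ i j, ArcRel n a X i j → ArcRel n a X j i := by
    rintro i j ⟨x, y, hxy, hx, hy⟩
    exact ⟨y, x, hXsym x y hxy, hy, hx⟩
  -- distinctness of three circularly ordered points
  have hsdist : ∀ {p q r : Circ}, sbtw p q r → p ≠ q ∧ q ≠ r ∧ p ≠ r := by
    intro p q r h
    rw [sbtw_emb 0] at h
    refine ⟨fun he => ?_, fun he => ?_, fun he => ?_⟩ <;>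
      (rw [he] at h; rcases h with ⟨h1,h2⟩|⟨h1,h2⟩|⟨h1,h2⟩ <;> linarith)
  have hdij : 3 ≤ n → ∀ i j : Fin n, i < j → a i ≠ a j := by
    intro h3 i j hij heq
    obtain ⟨k, hki, hkj⟩ : ∃ k : Fin n, k ≠ i ∧ k ≠ j := by
      by_contra hcon
      push_neg at hcon
      have hsub : (Finset.univ : Finset (Fin n)) ⊆ {i, j} := by
        intro k _
        rcases eq_or_ne k i with h|h
        · simp [h]
        · simp [hcon k h]
      have hcard := Finset.card_le_card hsub
      rw [Finset.card_univ, Fintype.card_fin] at hcard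
      have h2 : ({i, j} : Finset (Fin n)).card ≤ 2 :=
        (Finset.card_insert_le _ _).trans (by simp)
      omega
    rcases lt_trichotomy k i with hk|hk|hk
    · exact (hsdist (hacyc k i j hk hij)).2.1 heq
    · exact hki hk
    · rcases lt_trichotomy k j with hk2|hk2|hk2
      · exact (hsdist (hacyc i k j hk hk2)).2.2 heq
      · exact hkj hk2
      · exact (hsdist (hacyc i j k hij hk2)).1 heq
  by_cases hdeg : ∃ i : Fin n, a i = a (i + 1)
  · -- degenerate case: all intervals are empty
    obtain ⟨i₀, h₀⟩ := hdeg
    have hn2 : n ≤ 2 := by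
      by_contra h3
      push_neg at h3
      have hne01 : i₀ ≠ i₀ + 1 := by
        intro he
        have hv := congrArg Fin.val he
        rw [fin_add_one_val] at hv
        have := i₀.isLt
        rcases Nat.lt_or_ge (i₀.val + 1) n with h|h
        · rw [Nat.mod_eq_of_lt h] at hv; omega
        · have : i₀.val + 1 = n := by omega
          rw [this, Nat.mod_self] at hv; omega
      rcases lt_or_gt_of_ne hne01 with h|h
      · exact hdij (by omega) _ _ h h₀
      · exact hdij (by omega) _ _ h h₀.symm
    have hvals : ∀ i : Fin n, a i = a (i + 1) := by
      have hn1 : n = 1 ∨ n = 2 := by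
        have := Nat.pos_of_ne_zero (NeZero.ne n); omega
      rcases hn1 with rfl|rfl
      · intro i; exact congrArg a (Subsingleton.elim _ _)
      · intro i
        rcases eq_or_ne i i₀ with rfl|hne'
        · exact h₀
        · have hval : i.val = (i₀.val + 1) % 2 := by
            have h1 := i.isLt; have h2 := i₀.isLt
            have h3 : i.val ≠ i₀.val := fun h => hne' (Fin.ext h)
            omega
          have hii : i = i₀ + 1 := Fin.ext (by rw [fin_add_one_val]; exact hval.symm ▸ rfl)
          have h11 : i₀ + 1 + 1 = i₀ := by
            apply Fin.ext
            rw [fin_add_one_val, fin_add_one_val]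
            have := i₀.isLt
            omega
          rw [hii, h11]
          exact h₀.symm
    have hempty : ∀ i : Fin n, arcInterval (a i) (a (i + 1)) = ∅ := by
      intro i
      ext s
      simp only [arcInterval, Set.mem_setOf_eq, Set.mem_empty_iff_false, iff_false]
      rw [← hvals i, sbtw_emb 0]
      rintro (⟨h1,h2⟩|⟨h1,h2⟩|⟨h1,h2⟩) <;> linarith
    refine ⟨hsym, ?_, ?_, ?_⟩
    · rintro i ⟨x, y, -, hx⟩
      rw [hempty i] at hx
      exact absurd hx (Set.notMem_empty x)
    · rintro i j k ⟨x, y, -, hx, -⟩ -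
      rw [hempty i] at hx
      exact absurd hx (Set.notMem_empty x)
    · rintro i k j l - - - ⟨x, y, -, hx, -⟩ -
      rw [hempty i] at hx
      exact absurd hx (Set.notMem_empty x)
  · -- main case
    push_neg at hdeg
    have hn2 : 2 ≤ n := by
      by_contra h
      push_neg at h
      have hn1 : n = 1 := by have := Nat.pos_of_ne_zero (NeZero.ne n); omega
      subst hn1
      exact hdeg 0 (congrArg a (Subsingleton.elim _ _))
    have hpair : ∀ i j : Fin n, i ≠ j → a i ≠ a j := by
      have key : ∀ i j : Fin n, i < j → a i ≠ a j := by
        intro i j hij'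
        rcases Nat.lt_or_ge n 3 with h3|h3
        · have hvi := i.isLt; have hvj := j.isLt
          have hvij := Fin.lt_def.1 hij'
          have hji : j = i + 1 := by
            have h10 : i + 1 ≠ 0 := by
              rw [ne_eq, fin_add_one_eq_zero_iff]; omega
            apply Fin.ext
            rw [fin_add_one_val_of_ne h10]
            omega
          rw [hji]
          exact hdeg i
        · exact hdij h3 i j hij'
      intro i j hij
      rcases lt_or_gt_of_ne hij with h|h
      · exact key i j h
      · exact (key j i h).symm
    set c : ℝ := emb 0 (a 0) - 1 with hc
    have hA0 : emb c (a 0) = c + 1 := emb_self (a 0)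
    have hAmem : ∀ t : Fin n, emb c (a t) ∈ Set.Ioc c (c + 1) := fun t => emb_mem c (a t)
    have hAlt : ∀ t : Fin n, t ≠ 0 → emb c (a t) < c + 1 := by
      intro t ht
      rcases (hAmem t).2.lt_or_eq with h|h
      · exact h
      · exact absurd (emb_inj (h.trans hA0.symm)) (hpair t 0 ht)
    have hmono : ∀ s t : Fin n, s ≠ 0 → s < t → emb c (a s) < emb c (a t) := by
      intro s t hs hst
      have hsb := hacyc 0 s t (fin_pos_of_ne_zero hs) hst
      rw [sbtw_emb c, hA0] at hsb
      have h1 := hAmem s; have h2 := hAmem t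
      rcases hsb with ⟨g1,g2⟩|⟨g1,g2⟩|⟨g1,g2⟩
      · exact absurd g1 (by cases h1; linarith)
      · exact g1
      · exact absurd g2 (by cases h1; linarith)
    set lo : Fin n → ℝ := fun i => if i = 0 then c else emb c (a i) with hlo
    set hi : Fin n → ℝ := fun i => emb c (a (i + 1)) with hhi
    have hhieq : ∀ i : Fin n, hi i = emb c (a (i + 1)) := fun i => by simp only [hhi]
    have hloeq : ∀ i : Fin n, i ≠ 0 → lo i = emb c (a i) := by
      intro i h; simp only [hlo]; rw [if_neg h]
    have hlo0 : lo 0 = c := by simp [hlo]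
    have hhile : ∀ i : Fin n, hi i ≤ c + 1 := fun i => (hhieq i) ▸ (hAmem (i + 1)).2
    have hloge : ∀ i : Fin n, c ≤ lo i := by
      intro i
      rcases eq_or_ne i 0 with rfl|h
      · rw [hlo0]
      · rw [hloeq i h]; exact (hAmem i).1.le
    -- interval characterisation
    have hIoo : ∀ (i : Fin n) (x : Circ),
        x ∈ arcInterval (a i) (a (i + 1)) ↔ emb c x ∈ Set.Ioo (lo i) (hi i) := by
      intro i x
      have hE := emb_mem c x
      simp only [arcInterval, Set.mem_setOf_eq, Set.mem_Ioo]
      rw [sbtw_emb c, hhieq i]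
      by_cases h0 : i = 0
      · subst h0
        have h01 : (0 : Fin n) + 1 ≠ 0 := by
          rw [ne_eq, fin_add_one_eq_zero_iff]
          have h0v : ((0 : Fin n)).val = 0 := rfl
          omega
        have hA1top : emb c (a (0 + 1)) < c + 1 := hAlt _ h01
        rw [hA0, hlo0]
        constructor
        · rintro (⟨g1,g2⟩|⟨g1,g2⟩|⟨g1,g2⟩)
          · exact absurd g1 (by cases hE; linarith)
          · exact ⟨hE.1, g1⟩
          · exact absurd g2 (by cases hE; linarith)
        · rintro ⟨g1, g2⟩
          exact Or.inr (Or.inl ⟨g2, hA1top⟩)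
      · rw [hloeq i h0]
        have hAi := hAmem i
        by_cases h1 : i + 1 = 0
        · have htopeq : emb c (a (i + 1)) = c + 1 := by rw [h1, hA0]
          rw [htopeq]
          have hAitop : emb c (a i) < c + 1 := hAlt i h0
          constructor
          · rintro (⟨g1,g2⟩|⟨g1,g2⟩|⟨g1,g2⟩)
            · exact ⟨g1, g2⟩
            · linarith
            · linarith
          · rintro ⟨g1, g2⟩; exact Or.inl ⟨g1, g2⟩
        · have hstep : emb c (a i) < emb c (a (i + 1)) := by
            apply hmono i (i + 1) h0
            rw [Fin.lt_def, fin_add_one_val_of_ne h1]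
            omega
          have htop := (hAmem (i + 1)).2
          constructor
          · rintro (⟨g1,g2⟩|⟨g1,g2⟩|⟨g1,g2⟩)
            · exact ⟨g1, g2⟩
            · linarith
            · linarith
          · rintro ⟨g1, g2⟩; exact Or.inl ⟨g1, g2⟩
    -- no limit point inside an interval
    have hNoLim : ∀ (t i : Fin n), emb c (a t) ∉ Set.Ioo (lo i) (hi i) := by
      rintro t i ⟨h1, h2⟩
      rw [hhieq i] at h2
      by_cases ht0 : t = 0
      · subst ht0
        rw [hA0] at h2
        have := (hAmem (i + 1)).2
        linarith
      · by_cases h1' : i + 1 = 0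
        · have hival : i.val + 1 = n := (fin_add_one_eq_zero_iff i).1 h1'
          have hi0 : i ≠ 0 := by
            intro h
            rw [h] at hival
            have h0v : ((0 : Fin n)).val = 0 := rfl
            omega
          rw [hloeq i hi0] at h1
          rcases eq_or_ne t i with rfl|hti
          · linarith
          · have htv : t.val < i.val := by
              have h4 := t.isLt
              have h5 : t.val ≠ i.val := fun h => hti (Fin.ext h)
              omega
            have := hmono t i ht0 (Fin.lt_def.2 htv)
            linarith
        · have hip1v : ((i + 1 : Fin n)).val = i.val + 1 := fin_add_one_val_of_ne h1'
          by_cases hi0 : i = 0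
          · subst hi0
            rcases eq_or_ne t (0 + 1 : Fin n) with rfl|ht1
            · linarith
            · have h0v : ((0 : Fin n)).val = 0 := rfl
              have hgt : ((0 : Fin n) + 1).val < t.val := by
                have h4 := t.isLt
                have h5 : t.val ≠ ((0 : Fin n) + 1).val := fun h => ht1 (Fin.ext h)
                have h6 : t.val ≠ 0 := fun h => ht0 (Fin.ext (by rw [h, h0v]))
                omega
              have := hmono (0 + 1) t h1' (Fin.lt_def.2 hgt)
              linarith
          · rw [hloeq i hi0] at h1
            rcases Nat.lt_trichotomy t.val i.val with hv|hv|hv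
            · have := hmono t i ht0 (Fin.lt_def.2 hv); linarith
            · have : t = i := Fin.ext hv
              rw [this] at h1; linarith
            · rcases eq_or_ne t (i + 1) with rfl|hti
              · linarith
              · have hgt : ((i + 1 : Fin n)).val < t.val := by
                  have h5 : t.val ≠ ((i + 1 : Fin n)).val := fun h => hti (Fin.ext h)
                  omega
                have := hmono (i + 1) t h1' (Fin.lt_def.2 hgt)
                linarith
    -- intervals ordered by index
    have hIdx : ∀ i j : Fin n, i < j → hi i ≤ lo j := by
      intro i j hij
      have hvij := Fin.lt_def.1 hij
      have hj0 : j ≠ 0 := by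
        intro h
        rw [h] at hvij
        have h0v : ((0 : Fin n)).val = 0 := rfl
        omega
      rw [hloeq j hj0, hhieq i]
      have h1' : i + 1 ≠ 0 := by
        rw [ne_eq, fin_add_one_eq_zero_iff]
        have := j.isLt
        omega
      have hip1v := fin_add_one_val_of_ne h1'
      rcases eq_or_ne (i + 1) j with h|hne'
      · rw [h]
      · apply le_of_lt
        apply hmono (i + 1) j h1'
        rw [Fin.lt_def, hip1v]
        have h5 : ((i + 1 : Fin n)).val ≠ j.val := fun h => hne' (Fin.ext h)
        rw [hip1v] at h5
        omega
    have hptlt : ∀ {s t : Fin n} {p q : Circ}, s < t → emb c p ∈ Set.Ioo (lo s) (hi s) →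
        emb c q ∈ Set.Ioo (lo t) (hi t) → emb c p < emb c q := by
      intro s t p q hst hp hq
      exact lt_trans (lt_of_lt_of_le hp.2 (hIdx s t hst)) hq.1
    -- cover
    have hcover : ∀ z ∈ Z, ∃ i : Fin n, emb c z ∈ Set.Ioo (lo i) (hi i) := by
      intro z hz
      have hEz := emb_mem c z
      have hne : ∀ t : Fin n, emb c z ≠ emb c (a t) := by
        intro t h
        exact (ha t).2 (emb_inj h ▸ hz)
      have hzt : emb c z < c + 1 :=
        hEz.2.lt_or_eq.resolve_right (fun h => hne 0 (h.trans hA0.symm))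
      set T : Finset (Fin n) := Finset.univ.filter
        (fun t => t ≠ 0 ∧ emb c (a t) < emb c z) with hT
      rcases T.eq_empty_or_nonempty with hTe|hTne
      · refine ⟨0, ?_, ?_⟩
        · rw [hlo0]; exact hEz.1
        · have h01 : (0 : Fin n) + 1 ≠ 0 := by
            rw [ne_eq, fin_add_one_eq_zero_iff]
            have h0v : ((0 : Fin n)).val = 0 := rfl
            omega
          have hnlt : ¬ (emb c (a (0 + 1)) < emb c z) := by
            intro hlt
            have hmem' : (0 + 1 : Fin n) ∈ T := by
              rw [hT, Finset.mem_filter]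
              exact ⟨Finset.mem_univ _, h01, hlt⟩
            rw [hTe] at hmem'
            exact absurd hmem' (Finset.notMem_empty _)
          rw [hhieq 0]
          exact lt_of_le_of_ne (not_lt.1 hnlt) (hne (0 + 1))
      · set i := T.max' hTne with hidef
        have hiT : i ∈ T := T.max'_mem hTne
        rw [hT, Finset.mem_filter] at hiT
        obtain ⟨-, hi0, hilt⟩ := hiT
        refine ⟨i, ?_, ?_⟩
        · rw [hloeq i hi0]; exact hilt
        · rw [hhieq i]
          by_cases h1 : i + 1 = 0
          · rw [h1, hA0]; exact hzt
          · have hnlt : ¬ (emb c (a (i + 1)) < emb c z) := by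
              intro hlt
              have hmem' : (i + 1 : Fin n) ∈ T := by
                rw [hT, Finset.mem_filter]
                exact ⟨Finset.mem_univ _, h1, hlt⟩
              have hle := T.le_max' (i + 1) hmem'
              rw [← hidef] at hle
              have hv := Fin.le_def.1 hle
              rw [fin_add_one_val_of_ne h1] at hv
              omega
            exact lt_of_le_of_ne (not_lt.1 hnlt) (hne (i + 1))
    -- pred and succ stay in the interval
    have predIn : ∀ (i : Fin n) (z : Circ), z ∈ Z → emb c z ∈ Set.Ioo (lo i) (hi i) →
        pred z ∈ Z ∧ emb c (pred z) ∈ Set.Ioo (lo i) (emb c z) := by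
      intro i z hz hmem
      have hsb := sbtw_pred hZ hpred (ha i) hz
      rw [sbtw_emb c] at hsb
      have hP := emb_mem c (pred z)
      refine ⟨(hpred z hz).1, ?_⟩
      by_cases h0 : i = 0
      · subst h0
        rw [hA0] at hsb
        rw [hlo0]
        have hWtop : emb c z < c + 1 := lt_of_lt_of_le hmem.2 (hhile 0)
        refine ⟨hP.1, ?_⟩
        rcases hsb with ⟨g1,g2⟩|⟨g1,g2⟩|⟨g1,g2⟩
        · exact absurd g1 (by cases hP; linarith)
        · exact g1
        · exact absurd g2 (by cases hP; linarith)
      · rw [hloeq i h0] at hmem ⊢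
        have hWlo : emb c (a i) < emb c z := hmem.1
        rcases hsb with ⟨g1,g2⟩|⟨g1,g2⟩|⟨g1,g2⟩
        · exact ⟨g1, g2⟩
        · linarith
        · linarith
    have succIn : ∀ (i : Fin n) (z : Circ), z ∈ Z → emb c z ∈ Set.Ioo (lo i) (hi i) →
        succ z ∈ Z ∧ emb c (succ z) ∈ Set.Ioo (emb c z) (hi i) := by
      intro i z hz hmem
      have hsb := sbtw_succ hZ hsucc (ha (i + 1)) hz
      rw [sbtw_emb c, ← hhieq i] at hsb
      refine ⟨(hsucc z hz).1, ?_⟩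
      rcases hsb with ⟨g1,g2⟩|⟨g1,g2⟩|⟨g1,g2⟩
      · exact ⟨g1, g2⟩
      · exact absurd g2 (by linarith [hmem.2])
      · exact absurd g1 (by linarith [hmem.2])
    -- iterates
    have iterPred : ∀ (i : Fin n) (z : Circ), z ∈ Z → emb c z ∈ Set.Ioo (lo i) (hi i) →
        ∀ m : ℕ, pred^[m] z ∈ Z ∧ emb c (pred^[m] z) ∈ Set.Ioo (lo i) (hi i) := by
      intro i z hz hmem m
      induction m with
      | zero => exact ⟨hz, hmem⟩
      | succ m ih =>
        obtain ⟨hZ', hm'⟩ := predIn i _ ih.1 ih.2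
        rw [← Function.iterate_succ_apply' pred m z] at hZ' hm'
        exact ⟨hZ', hm'.1, lt_trans hm'.2 ih.2.2⟩
    have iterSucc : ∀ (i : Fin n) (z : Circ), z ∈ Z → emb c z ∈ Set.Ioo (lo i) (hi i) →
        ∀ m : ℕ, succ^[m] z ∈ Z ∧ emb c (succ^[m] z) ∈ Set.Ioo (lo i) (hi i) := by
      intro i z hz hmem m
      induction m with
      | zero => exact ⟨hz, hmem⟩
      | succ m ih =>
        obtain ⟨hZ', hm'⟩ := succIn i _ ih.1 ih.2
        rw [← Function.iterate_succ_apply' succ m z] at hZ' hm'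
        exact ⟨hZ', lt_trans ih.2.1 hm'.1, hm'.2⟩
    -- escape lemmas
    have escape_down : ∀ (j : Fin n) (u y : Circ), u ∈ Z → y ∈ Z →
        emb c u ∈ Set.Ioo (lo j) (hi j) → emb c y ∈ Set.Ioo (lo j) (hi j) →
        ∃ m : ℕ, pred^[m] u ∈ Z ∧ emb c (pred^[m] u) ∈ Set.Ioo (lo j) (emb c y) := by
      intro j u y hu hy hmu hmy
      rcases lt_trichotomy (emb c u) (emb c y) with hlt|heq|hgt
      · exact ⟨0, hu, hmu.1, hlt⟩
      · obtain ⟨h1Z, h1m⟩ := predIn j u hu hmu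
        have h1I : emb c (pred u) ∈ Set.Ioo (lo j) (hi j) := ⟨h1m.1, lt_trans h1m.2 hmu.2⟩
        obtain ⟨h2Z, h2m⟩ := predIn j (pred u) h1Z h1I
        have h2eq : pred^[2] u = pred (pred u) := by
          rw [Function.iterate_succ_apply', Function.iterate_one]
        refine ⟨2, ?_, ?_⟩
        · rw [h2eq]; exact h2Z
        · rw [h2eq]
          exact ⟨h2m.1, by rw [← heq]; exact lt_trans h2m.2 h1m.2⟩
      · by_contra hno
        push_neg at hno
        have key : ∀ m : ℕ, pred^[m] u ∈ Z ∧
            emb c (pred^[m] u) ∈ Set.Icc (emb c y) (emb c u) := by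
          intro m
          induction m with
          | zero => exact ⟨hu, hgt.le, le_rfl⟩
          | succ m ih =>
            have hI : emb c (pred^[m] u) ∈ Set.Ioo (lo j) (hi j) :=
              ⟨lt_of_lt_of_le hmy.1 ih.2.1, lt_of_le_of_lt ih.2.2 hmu.2⟩
            obtain ⟨hZ', hm'⟩ := predIn j _ ih.1 hI
            rw [← Function.iterate_succ_apply' pred m u] at hZ' hm'
            refine ⟨hZ', ?_, le_trans hm'.2.le ih.2.2⟩
            by_contra hlow
            push_neg at hlow
            exact (hno (m + 1) hZ') (Set.mem_Ioo.2 ⟨hm'.1, hlow⟩)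
        have hstep : ∀ m : ℕ, emb c (pred^[m + 1] u) < emb c (pred^[m] u) := by
          intro m
          have hI : emb c (pred^[m] u) ∈ Set.Ioo (lo j) (hi j) :=
            ⟨lt_of_lt_of_le hmy.1 (key m).2.1, lt_of_le_of_lt (key m).2.2 hmu.2⟩
          have h := (predIn j _ (key m).1 hI).2.2
          rwa [← Function.iterate_succ_apply' pred m u] at h
        have hanti : StrictAnti (fun m : ℕ => emb c (pred^[m] u)) :=
          strictAnti_nat_of_succ_lt hstep
        have hinj2 : Function.Injective (fun m : ℕ => pred^[m] u) := by
          intro m m' h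
          exact hanti.injective (congrArg (emb c) h)
        have hmem2 : ∀ m : ℕ, pred^[m] u ∈ Z ∩ {s | btw y s u} := by
          intro m
          refine ⟨(key m).1, ?_⟩
          rw [Set.mem_setOf_eq, btw_emb c]
          exact Or.inl ⟨(key m).2.1, (key m).2.2⟩
        have hfin : (Z ∩ {s | btw y s u}).Finite := by
          apply finite_inter_btw hZ
          intro ℓ hℓ
          rw [haAll] at hℓ
          obtain ⟨t, rfl⟩ := hℓ
          rw [btw_emb c]
          rintro (⟨g1,g2⟩|⟨g1,g2⟩|⟨g1,g2⟩)
          · exact hNoLim t j ⟨lt_of_lt_of_le hmy.1 g1, lt_of_le_of_lt g2 hmu.2⟩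
          · linarith
          · linarith
        exact hfin.not_infinite (Set.infinite_of_injective_forall_mem hinj2 hmem2)
    have escape_up : ∀ (j : Fin n) (u y : Circ), u ∈ Z → y ∈ Z →
        emb c u ∈ Set.Ioo (lo j) (hi j) → emb c y ∈ Set.Ioo (lo j) (hi j) →
        ∃ m : ℕ, succ^[m] u ∈ Z ∧ emb c (succ^[m] u) ∈ Set.Ioo (emb c y) (hi j) := by
      intro j u y hu hy hmu hmy
      rcases lt_trichotomy (emb c y) (emb c u) with hlt|heq|hgt
      · exact ⟨0, hu, hlt, hmu.2⟩
      · obtain ⟨h1Z, h1m⟩ := succIn j u hu hmu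
        have h1I : emb c (succ u) ∈ Set.Ioo (lo j) (hi j) := ⟨lt_trans hmu.1 h1m.1, h1m.2⟩
        obtain ⟨h2Z, h2m⟩ := succIn j (succ u) h1Z h1I
        have h2eq : succ^[2] u = succ (succ u) := by
          rw [Function.iterate_succ_apply', Function.iterate_one]
        refine ⟨2, ?_, ?_⟩
        · rw [h2eq]; exact h2Z
        · rw [h2eq]
          exact ⟨by rw [heq]; exact lt_trans h1m.1 h2m.1, h2m.2⟩
      · by_contra hno
        push_neg at hno
        have key : ∀ m : ℕ, succ^[m] u ∈ Z ∧
            emb c (succ^[m] u) ∈ Set.Icc (emb c u) (emb c y) := by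
          intro m
          induction m with
          | zero => exact ⟨hu, le_rfl, hgt.le⟩
          | succ m ih =>
            have hI : emb c (succ^[m] u) ∈ Set.Ioo (lo j) (hi j) :=
              ⟨lt_of_lt_of_le hmu.1 ih.2.1, lt_of_le_of_lt ih.2.2 hmy.2⟩
            obtain ⟨hZ', hm'⟩ := succIn j _ ih.1 hI
            rw [← Function.iterate_succ_apply' succ m u] at hZ' hm'
            refine ⟨hZ', le_trans ih.2.1 hm'.1.le, ?_⟩
            by_contra hhigh
            push_neg at hhigh
            exact (hno (m + 1) hZ') (Set.mem_Ioo.2 ⟨hhigh, hm'.2⟩)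
        have hstep : ∀ m : ℕ, emb c (succ^[m] u) < emb c (succ^[m + 1] u) := by
          intro m
          have hI : emb c (succ^[m] u) ∈ Set.Ioo (lo j) (hi j) :=
            ⟨lt_of_lt_of_le hmu.1 (key m).2.1, lt_of_le_of_lt (key m).2.2 hmy.2⟩
          have h := (succIn j _ (key m).1 hI).2.1
          rwa [← Function.iterate_succ_apply' succ m u] at h
        have hmono2 : StrictMono (fun m : ℕ => emb c (succ^[m] u)) :=
          strictMono_nat_of_lt_succ hstep
        have hinj2 : Function.Injective (fun m : ℕ => succ^[m] u) := by
          intro m m' h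
          exact hmono2.injective (congrArg (emb c) h)
        have hmem2 : ∀ m : ℕ, succ^[m] u ∈ Z ∩ {s | btw u s y} := by
          intro m
          refine ⟨(key m).1, ?_⟩
          rw [Set.mem_setOf_eq, btw_emb c]
          exact Or.inl ⟨(key m).2.1, (key m).2.2⟩
        have hfin : (Z ∩ {s | btw u s y}).Finite := by
          apply finite_inter_btw hZ
          intro ℓ hℓ
          rw [haAll] at hℓ
          obtain ⟨t, rfl⟩ := hℓ
          rw [btw_emb c]
          rintro (⟨g1,g2⟩|⟨g1,g2⟩|⟨g1,g2⟩)
          · exact hNoLim t j ⟨lt_of_lt_of_le hmu.1 g1, lt_of_le_of_lt g2 hmy.2⟩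
          · linarith
          · linarith
        exact hfin.not_infinite (Set.infinite_of_injective_forall_mem hinj2 hmem2)
    -- X closed under iterated rotations
    have hXcwIter : ∀ (m : ℕ) (x y : Circ), X x y → X (pred^[m] x) (pred^[m] y) := by
      intro m
      induction m with
      | zero => intro x y h; exact h
      | succ m ih =>
        intro x y h
        rw [Function.iterate_succ_apply' pred m x, Function.iterate_succ_apply' pred m y]
        exact hXcw _ _ (ih x y h)
    have hXccwIter : ∀ (m : ℕ) (x y : Circ), X x y → X (succ^[m] x) (succ^[m] y) := by
      intro m
      induction m with
      | zero => intro x y h; exact h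
      | succ m ih =>
        intro x y h
        rw [Function.iterate_succ_apply' succ m x, Function.iterate_succ_apply' succ m y]
        exact hXccw _ _ (ih x y h)
    -- reflexivity on the support
    have hrefl : ∀ (i : Fin n) (x y : Circ), X x y → x ∈ arcInterval (a i) (a (i + 1)) →
        ArcRel n a X i i := by
      intro i x y hxy hxmem
      obtain ⟨hxZ, hyZ, -, -, -⟩ := hXarc x y hxy
      have hxI : emb c x ∈ Set.Ioo (lo i) (hi i) := (hIoo i x).1 hxmem
      obtain ⟨j, hyI⟩ := hcover y hyZ
      by_cases hij : j = i
      · subst hij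
        exact ⟨x, y, hxy, hxmem, (hIoo j y).2 hyI⟩
      · obtain ⟨hpxZ, hpxm⟩ := predIn i x hxZ hxI
        have hpxI : emb c (pred x) ∈ Set.Ioo (lo i) (hi i) := ⟨hpxm.1, lt_trans hpxm.2 hxI.2⟩
        obtain ⟨hp2xZ, hp2xm⟩ := predIn i (pred x) hpxZ hpxI
        obtain ⟨hsxZ, hsxm⟩ := succIn i x hxZ hxI
        obtain ⟨hpyZ, hpym⟩ := predIn j y hyZ hyI
        have hpyI : emb c (pred y) ∈ Set.Ioo (lo j) (hi j) := ⟨hpym.1, lt_trans hpym.2 hyI.2⟩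
        obtain ⟨hp2yZ, hp2ym⟩ := predIn j (pred y) hpyZ hpyI
        have hX2 : X (pred (pred y)) (pred (pred x)) := hXsym _ _ (hXcw _ _ (hXcw _ _ hxy))
        have hp2xI : emb c (pred (pred x)) ∈ Set.Ioo (lo i) (hi i) :=
          ⟨hp2xm.1, lt_trans hp2xm.2 hpxI.2⟩
        have hp2yI : emb c (pred (pred y)) ∈ Set.Ioo (lo j) (hi j) :=
          ⟨hp2ym.1, lt_trans hp2ym.2 hpyI.2⟩
        have hcross : Cross x y (pred (pred y)) (pred (pred x)) := by
          constructor
          · rw [sbtw_emb c]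
            rcases lt_or_gt_of_ne (show i ≠ j from fun h => hij h.symm) with h|h
            · exact Or.inl ⟨hptlt h hxI hp2yI, lt_trans hp2ym.2 hpym.2⟩
            · exact Or.inr (Or.inl ⟨lt_trans hp2ym.2 hpym.2, hptlt h hyI hxI⟩)
          · rw [sbtw_emb c]
            rcases lt_or_gt_of_ne (show i ≠ j from fun h => hij h.symm) with h|h
            · exact Or.inr (Or.inl ⟨lt_trans hp2xm.2 hpxm.2, hptlt h hxI hyI⟩)
            · exact Or.inl ⟨hptlt h hyI hp2xI, lt_trans hp2xm.2 hpxm.2⟩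
        have harc : IsArc Z pred succ x (pred (pred x)) := by
          refine ⟨hxZ, hp2xZ, ?_, ?_, ?_⟩
          · intro h
            have h' := congrArg (emb c) h
            have := hp2xm.2; have := hpxm.2
            linarith
          · intro h
            have h' := congrArg (emb c) h
            have := hp2xm.2
            linarith
          · intro h
            have h' := congrArg (emb c) h
            have := hp2xm.2; have := hpxm.2; have := hsxm.1
            linarith
        have hres := hXpto x y (pred (pred y)) (pred (pred x)) hxy hX2 hcross x (pred (pred x))
          (by simp) (by simp) harc
        exact ⟨x, pred (pred x), hres, hxmem,
          (hIoo i _).2 ⟨hp2xm.1, lt_trans hp2xm.2 (lt_trans hpxm.2 hxI.2)⟩⟩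
    -- transitivity
    have htrans : ∀ i j k, ArcRel n a X i j → ArcRel n a X j k → ArcRel n a X i k := by
      rintro i j k ⟨x, y, hxy, hxi, hyj⟩ hjk
      by_cases hij : i = j
      · subst hij; exact hjk
      obtain ⟨u, v, huv, huj, hvk⟩ := hjk
      by_cases hjk' : j = k
      · subst hjk'; exact ⟨x, y, hxy, hxi, hyj⟩
      by_cases hik : i = k
      · subst hik; exact hrefl i x y hxy hxi
      obtain ⟨hxZ, hyZ, -, -, -⟩ := hXarc x y hxy
      obtain ⟨huZ, hvZ, -, -, -⟩ := hXarc u v huv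
      have hxI := (hIoo i x).1 hxi
      have hyI := (hIoo j y).1 hyj
      have huI := (hIoo j u).1 huj
      have hvI := (hIoo k v).1 hvk
      -- common finishing move
      have finish : ∀ u' v' : Circ, X u' v' → emb c u' ∈ Set.Ioo (lo j) (hi j) →
          emb c v' ∈ Set.Ioo (lo k) (hi k) → (Cross x y u' v' ∨ Cross x y v' u') →
          ArcRel n a X i k := by
        intro u' v' hX' hu'I hv'I hcr
        obtain ⟨hu'Z, hv'Z, -, -, -⟩ := hXarc u' v' hX'
        obtain ⟨hpxZ, hpxm⟩ := predIn i x hxZ hxI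
        obtain ⟨hsxZ, hsxm⟩ := succIn i x hxZ hxI
        have hpxI : emb c (pred x) ∈ Set.Ioo (lo i) (hi i) := ⟨hpxm.1, lt_trans hpxm.2 hxI.2⟩
        have hsxI : emb c (succ x) ∈ Set.Ioo (lo i) (hi i) := ⟨lt_trans hxI.1 hsxm.1, hsxm.2⟩
        have hneik : ∀ q : Circ, emb c q ∈ Set.Ioo (lo k) (hi k) →
            ∀ p : Circ, emb c p ∈ Set.Ioo (lo i) (hi i) → q ≠ p := by
          intro q hq p hp h
          rcases lt_or_gt_of_ne (show i ≠ k from hik) with h'|h'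
          · exact absurd (congrArg (emb c) h) (ne_of_gt (hptlt h' hp hq))
          · exact absurd (congrArg (emb c) h) (ne_of_lt (hptlt h' hq hp))
        have harc : IsArc Z pred succ x v' :=
          ⟨hxZ, hv'Z, hneik v' hv'I x hxI, hneik v' hv'I (pred x) hpxI,
            hneik v' hv'I (succ x) hsxI⟩
        have hXxv : X x v' := by
          rcases hcr with hcr|hcr
          · exact hXpto x y u' v' hxy hX' hcr x v' (by simp) (by simp) harc
          · exact hXpto x y v' u' hxy (hXsym _ _ hX') hcr x v' (by simp) (by simp) harc
        exact ⟨x, v', hXxv, hxi, (hIoo k v').2 hv'I⟩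
      have hclass : (i < j ∧ j < k) ∨ (j < k ∧ k < i) ∨ (k < i ∧ i < j) ∨
          (i < k ∧ k < j) ∨ (k < j ∧ j < i) ∨ (j < i ∧ i < k) := by
        rcases lt_trichotomy i j with h1|h1|h1
        · rcases lt_trichotomy j k with h2|h2|h2
          · exact Or.inl ⟨h1, h2⟩
          · exact absurd h2 hjk'
          · rcases lt_trichotomy i k with h3|h3|h3
            · exact Or.inr (Or.inr (Or.inr (Or.inl ⟨h3, h2⟩)))
            · exact absurd h3 hik
            · exact Or.inr (Or.inr (Or.inl ⟨h3, h1⟩))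
        · exact absurd h1 hij
        · rcases lt_trichotomy j k with h2|h2|h2
          · rcases lt_trichotomy i k with h3|h3|h3
            · exact Or.inr (Or.inr (Or.inr (Or.inr (Or.inr ⟨h1, h3⟩))))
            · exact absurd h3 hik
            · exact Or.inr (Or.inl ⟨h2, h3⟩)
          · exact absurd h2 hjk'
          · exact Or.inr (Or.inr (Or.inr (Or.inr (Or.inl ⟨h2, h1⟩))))
      -- class A : cyc i j k ; class B : cyc i k j
      have goA : (i < j ∧ j < k) ∨ (j < k ∧ k < i) ∨ (k < i ∧ i < j) → ArcRel n a X i k := by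
        intro hcl
        obtain ⟨m, humZ, hum⟩ := escape_down j u y huZ hyZ huI hyI
        have hvm := iterPred k v hvZ hvI m
        have hX' : X (pred^[m] u) (pred^[m] v) := hXcwIter m u v huv
        have humI : emb c (pred^[m] u) ∈ Set.Ioo (lo j) (hi j) :=
          ⟨hum.1, lt_trans hum.2 hyI.2⟩
        apply finish _ _ hX' humI hvm.2
        left
        constructor
        · rw [sbtw_emb c]
          rcases hcl with ⟨h1,h2⟩|⟨h1,h2⟩|⟨h1,h2⟩
          · exact Or.inl ⟨hptlt h1 hxI humI, hum.2⟩
          · exact Or.inr (Or.inl ⟨hum.2, hptlt (lt_trans h1 h2) hyI hxI⟩)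
          · exact Or.inl ⟨hptlt h2 hxI humI, hum.2⟩
        · rw [sbtw_emb c]
          rcases hcl with ⟨h1,h2⟩|⟨h1,h2⟩|⟨h1,h2⟩
          · exact Or.inr (Or.inr ⟨hptlt h1 hxI hyI, hptlt h2 hyI hvm.2⟩)
          · exact Or.inl ⟨hptlt h1 hyI hvm.2, hptlt h2 hvm.2 hxI⟩
          · exact Or.inr (Or.inl ⟨hptlt h1 hvm.2 hxI, hptlt h2 hxI hyI⟩)
      have goB : (i < k ∧ k < j) ∨ (k < j ∧ j < i) ∨ (j < i ∧ i < k) → ArcRel n a X i k := by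
        intro hcl
        obtain ⟨m, humZ, hum⟩ := escape_up j u y huZ hyZ huI hyI
        have hvm := iterSucc k v hvZ hvI m
        have hX' : X (succ^[m] u) (succ^[m] v) := hXccwIter m u v huv
        have humI : emb c (succ^[m] u) ∈ Set.Ioo (lo j) (hi j) :=
          ⟨lt_trans hyI.1 hum.1, hum.2⟩
        apply finish _ _ hX' humI hvm.2
        right
        constructor
        · rw [sbtw_emb c]
          rcases hcl with ⟨h1,h2⟩|⟨h1,h2⟩|⟨h1,h2⟩
          · exact Or.inl ⟨hptlt h1 hxI hvm.2, hptlt h2 hvm.2 hyI⟩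
          · exact Or.inr (Or.inl ⟨hptlt h1 hvm.2 hyI, hptlt h2 hyI hxI⟩)
          · exact Or.inr (Or.inr ⟨hptlt h1 hyI hxI, hptlt h2 hxI hvm.2⟩)
        · rw [sbtw_emb c]
          rcases hcl with ⟨h1,h2⟩|⟨h1,h2⟩|⟨h1,h2⟩
          · exact Or.inr (Or.inr ⟨hptlt (lt_trans h1 h2) hxI hyI, hum.1⟩)
          · exact Or.inl ⟨hum.1, hptlt h2 humI hxI⟩
          · exact Or.inl ⟨hum.1, hptlt h1 humI hxI⟩
      rcases hclass with h|h|h|h|h|h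
      · exact goA (Or.inl h)
      · exact goA (Or.inr (Or.inl h))
      · exact goA (Or.inr (Or.inr h))
      · exact goB (Or.inl h)
      · exact goB (Or.inr (Or.inl h))
      · exact goB (Or.inr (Or.inr h))
    -- non-crossing
    have hnc : ∀ i k j l : Fin n, i < k → k < j → j < l →
        ArcRel n a X i j → ArcRel n a X k l → ArcRel n a X i k := by
      rintro i k j l hik hkj hjl ⟨x, y, hxy, hxi, hyj⟩ ⟨u, v, huv, huk, hvl⟩
      obtain ⟨hxZ, hyZ, -, -, -⟩ := hXarc x y hxy
      obtain ⟨huZ, hvZ, -, -, -⟩ := hXarc u v huv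
      have hxI := (hIoo i x).1 hxi
      have hyI := (hIoo j y).1 hyj
      have huI := (hIoo k u).1 huk
      have hvI := (hIoo l v).1 hvl
      have hcross : Cross x y u v := by
        constructor
        · rw [sbtw_emb c]
          exact Or.inl ⟨hptlt hik hxI huI, hptlt hkj huI hyI⟩
        · rw [sbtw_emb c]
          exact Or.inr (Or.inr ⟨hptlt (lt_trans hik hkj) hxI hyI, hptlt hjl hyI hvI⟩)
      obtain ⟨hpxZ, hpxm⟩ := predIn i x hxZ hxI
      obtain ⟨hsxZ, hsxm⟩ := succIn i x hxZ hxI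
      have hpxI : emb c (pred x) ∈ Set.Ioo (lo i) (hi i) := ⟨hpxm.1, lt_trans hpxm.2 hxI.2⟩
      have hsxI : emb c (succ x) ∈ Set.Ioo (lo i) (hi i) := ⟨lt_trans hxI.1 hsxm.1, hsxm.2⟩
      have hneik : ∀ p : Circ, emb c p ∈ Set.Ioo (lo i) (hi i) → u ≠ p := by
        intro p hp h
        exact absurd (congrArg (emb c) h) (ne_of_gt (hptlt hik hp huI))
      have harc : IsArc Z pred succ x u :=
        ⟨hxZ, huZ, hneik x hxI, hneik (pred x) hpxI, hneik (succ x) hsxI⟩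
      have hres := hXpto x y u v hxy huv hcross x u (by simp) (by simp) harc
      exact ⟨x, u, hres, hxi, (hIoo k u).2 huI⟩
    exact ⟨hsym, fun i h => by obtain ⟨x, y, hxy, hx⟩ := h; exact hrefl i x y hxy hx, htrans, hnc⟩
end

section
/- The map P ↦ P^c from non-crossing partitions of [n] to non-crossing partitions of [n] (Kreweras complement) is an order-reversing bijection: P ≤ Q implies Q^c ≤ P^c. -/
/-!
Label the gap between `i` and `i + 1` by the primed point `i'`. The chord `i'j'` crosses no
block of `P` iff the unprimed points between `i'` and `j'`, namely `Iic i ∆ Iic j`, form a union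
of blocks of `P`; since symmetric differences compose, this is an equivalence relation, and its
classes form the Kreweras complement. A crossing between two classes, or between a class and a
block of `P`, would produce such a chord splitting a block; conversely every block of a
compatible partition consists of such chords, which gives maximality. Coarsening `P` only adds
chords, so the complement is order-reversing. It is injective, hence bijective, because two
points lie in a common block of `P` iff no such chord separates them.
-/

open Finset
open scoped symmDiff

namespace Kreweras

section Partition

variable {α : Type*}

def SameBlock (P : Finset (Finset α)) (a b : α) : Prop := ∃ B ∈ P, a ∈ B ∧ b ∈ B

theorem sameBlock_iff_mem {P : Finset (Finset α)}
    (hP : ∀ B ∈ P, ∀ B' ∈ P, B ≠ B' → Disjoint B B') {B : Finset α} (hB : B ∈ P) {a b : α}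
    (ha : a ∈ B) : SameBlock P a b ↔ b ∈ B := by
  refine ⟨fun ⟨B', hB', haB', hbB'⟩ => ?_, fun hb => ⟨B, hB, ha, hb⟩⟩
  by_contra hbB
  have hne : B ≠ B' := by rintro rfl; exact hbB hbB'
  exact Finset.disjoint_left.mp (hP B hB B' hB' hne) ha haB'

theorem subset_of_sameBlock_iff {P P' : Finset (Finset α)} (hP : ∀ B ∈ P, B.Nonempty)
    (hPd : ∀ B ∈ P, ∀ B' ∈ P, B ≠ B' → Disjoint B B')
    (hP'd : ∀ B ∈ P', ∀ B' ∈ P', B ≠ B' → Disjoint B B')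
    (h : ∀ a b, SameBlock P a b ↔ SameBlock P' a b) : P ⊆ P' := by
  intro B hB
  obtain ⟨a, ha⟩ := hP B hB
  obtain ⟨B', hB', ha', -⟩ := (h a a).mp ⟨B, hB, ha, ha⟩
  have : B = B' := by
    ext b
    rw [← sameBlock_iff_mem hPd hB ha, ← sameBlock_iff_mem hP'd hB' ha', h]
  exact this ▸ hB'

def Saturated (P : Finset (Finset α)) (S : Finset α) : Prop :=
  ∀ B ∈ P, ∀ x ∈ B, ∀ y ∈ B, x ∈ S → y ∈ S

theorem Saturated.mem_iff {P : Finset (Finset α)} {S : Finset α} (hS : Saturated P S)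
    {B : Finset α} (hB : B ∈ P) {x y : α} (hx : x ∈ B) (hy : y ∈ B) : x ∈ S ↔ y ∈ S :=
  ⟨hS B hB x hx y hy, hS B hB y hy x hx⟩

theorem Saturated.inter [DecidableEq α] {P : Finset (Finset α)} {S T : Finset α}
    (hS : Saturated P S) (hT : Saturated P T) : Saturated P (S ∩ T) := by
  intro B hB x hx y hy
  simp only [mem_inter, hS.mem_iff hB hx hy, hT.mem_iff hB hx hy, imp_self]

theorem Saturated.symmDiff [DecidableEq α] {P : Finset (Finset α)} {S T : Finset α}
    (hS : Saturated P S) (hT : Saturated P T) : Saturated P (S ∆ T) := by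
  intro B hB x hx y hy
  simp only [mem_symmDiff, hS.mem_iff hB hx hy, hT.mem_iff hB hx hy, imp_self]

end Partition

theorem Saturated.of_refines {m : ℕ} {P Q : Finset (Finset (Fin m))} {S : Finset (Fin m)}
    (h : refines m P Q) (hS : Saturated Q S) : Saturated P S := by
  intro B hB x hx y hy
  obtain ⟨B', hB', hBB'⟩ := h B hB
  exact hS B' hB' x (hBB' hx) y (hBB' hy)

variable {n : ℕ} {P : Finset (Finset (Fin n))}

theorem mem_Ioo_of_mem_Ioo (hP : IsNCPartition n P) {B₀ B : Finset (Fin n)}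
    (hB₀ : B₀ ∈ P) (hB : B ∈ P) {x y u w : Fin n} (hx : x ∈ B₀) (hy : y ∈ B₀) (hu : u ∈ B)
    (hw : w ∈ B) (huB₀ : u ∉ B₀) (hxu : x < u) (huy : u < y) : x < w ∧ w < y := by
  have hne : B ≠ B₀ := by rintro rfl; exact huB₀ hu
  have hdisj := Finset.disjoint_left.mp (hP.2.1 B hB B₀ hB₀ hne)
  have hwx : w ≠ x := by rintro rfl; exact hdisj hw hx
  have hwy : w ≠ y := by rintro rfl; exact hdisj hw hy
  rcases lt_or_gt_of_ne hwx with hwx | hxw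
  · exact absurd ⟨hwx, hxu, huy⟩ (hP.2.2.2 B hB B₀ hB₀ hne w hw u hu x hx y hy)
  rcases lt_or_gt_of_ne hwy with hwy | hyw
  · exact ⟨hxw, hwy⟩
  · exact absurd ⟨hxu, huy, hyw⟩ (hP.2.2.2 B₀ hB₀ B hB hne.symm x hx y hy u hu w hw)

theorem saturated_Ioo (hP : IsNCPartition n P) {B₀ : Finset (Fin n)}
    (hB₀ : B₀ ∈ P) {x y : Fin n} (hx : x ∈ B₀) (hy : y ∈ B₀)
    (hgap : ∀ z ∈ B₀, ¬(x < z ∧ z < y)) : Saturated P (Ioo x y) := by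
  intro B hB u hu w hw hu'
  rw [mem_Ioo] at hu' ⊢
  exact mem_Ioo_of_mem_Ioo hP hB₀ hB hx hy hu hw (fun h => hgap u h hu') hu'.1 hu'.2

theorem saturated_Icc (hP : IsNCPartition n P) {B₀ : Finset (Fin n)}
    (hB₀ : B₀ ∈ P) {x y : Fin n} (hx : x ∈ B₀) (hy : y ∈ B₀) (hspan : B₀ ⊆ Icc x y) :
    Saturated P (Icc x y) := by
  intro B hB u hu w hw hu'
  by_cases huB₀ : u ∈ B₀
  · have : B = B₀ := by
      by_contra hne
      exact Finset.disjoint_left.mp (hP.2.1 B hB B₀ hB₀ hne) hu huB₀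
    exact hspan (this ▸ hw)
  · have hux : u ≠ x := by rintro rfl; exact huB₀ hx
    have huy : u ≠ y := by rintro rfl; exact huB₀ hy
    rw [mem_Icc] at hu' ⊢
    have := mem_Ioo_of_mem_Ioo hP hB₀ hB hx hy hu hw huB₀ (lt_of_le_of_ne hu'.1 hux.symm)
      (lt_of_le_of_ne hu'.2 huy)
    omega

/-- The unprimed points strictly between the primed points `i'` and `j'`. -/
def between (i j : Fin n) : Finset (Fin n) := Iic i ∆ Iic j

theorem mem_between {i j t : Fin n} : t ∈ between i j ↔ ¬(t ≤ i ↔ t ≤ j) := by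
  simp only [between, mem_symmDiff, mem_Iic]
  tauto

/-- The chord `i'j'` crosses no block of `P`. -/
def KrewerasRel (P : Finset (Finset (Fin n))) (i j : Fin n) : Prop :=
  Saturated P (between i j)

theorem krewerasRel_refl (P : Finset (Finset (Fin n))) (i : Fin n) : KrewerasRel P i i := by
  simp [KrewerasRel, between, Saturated]

theorem KrewerasRel.symm {i j : Fin n} (h : KrewerasRel P i j) : KrewerasRel P j i := by
  rwa [KrewerasRel, between, symmDiff_comm]

theorem KrewerasRel.trans {i j k : Fin n} (hij : KrewerasRel P i j) (hjk : KrewerasRel P j k) :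
    KrewerasRel P i k := by
  have h := Saturated.symmDiff hij hjk
  rwa [between, between, symmDiff_assoc, symmDiff_symmDiff_cancel_left] at h

theorem KrewerasRel.of_refines {Q : Finset (Finset (Fin n))} (h : refines n P Q) {i j : Fin n}
    (hij : KrewerasRel Q i j) : KrewerasRel P i j :=
  Saturated.of_refines h hij

theorem krewerasRel_of_consecutive (hP : IsNCPartition n P)
    {B : Finset (Fin n)} (hB : B ∈ P) {x y i : Fin n} (hx : x ∈ B) (hy : y ∈ B) (hxy : x < y)
    (hgap : ∀ z ∈ B, ¬(x < z ∧ z < y)) (hi : i.val + 1 = y.val) : KrewerasRel P x i := by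
  have : between x i = Ioo x y := by
    ext t
    simp only [mem_between, mem_Ioo]
    omega
  rw [KrewerasRel, this]
  exact saturated_Ioo hP hB hx hy hgap

theorem krewerasRel_of_span (hP : IsNCPartition n P) {B : Finset (Fin n)}
    (hB : B ∈ P) {x y i : Fin n} (hx : x ∈ B) (hy : y ∈ B) (hspan : B ⊆ Icc x y)
    (hi : i.val + 1 = x.val) : KrewerasRel P i y := by
  have hxy : x ≤ y := (mem_Icc.mp (hspan hx)).2
  have : between i y = Icc x y := by
    ext t
    simp only [mem_between, mem_Icc]
    omega
  rw [KrewerasRel, this]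
  exact saturated_Icc hP hB hx hy hspan

open Classical in
noncomputable def krewerasBlock (P : Finset (Finset (Fin n))) (i : Fin n) : Finset (Fin n) :=
  univ.filter (KrewerasRel P i)

noncomputable def kreweras (P : Finset (Finset (Fin n))) : Finset (Finset (Fin n)) :=
  univ.image (krewerasBlock P)

theorem mem_krewerasBlock {i j : Fin n} : j ∈ krewerasBlock P i ↔ KrewerasRel P i j := by
  simp [krewerasBlock]

theorem mem_kreweras {C : Finset (Fin n)} : C ∈ kreweras P ↔ ∃ i, krewerasBlock P i = C := by
  simp [kreweras]

theorem krewerasBlock_mem_kreweras (i : Fin n) : krewerasBlock P i ∈ kreweras P :=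
  mem_kreweras.mpr ⟨i, rfl⟩

theorem self_mem_krewerasBlock (i : Fin n) : i ∈ krewerasBlock P i :=
  mem_krewerasBlock.mpr (krewerasRel_refl P i)

theorem krewerasBlock_eq {i j : Fin n} (h : KrewerasRel P i j) :
    krewerasBlock P i = krewerasBlock P j := by
  ext t
  simp only [mem_krewerasBlock]
  exact ⟨h.symm.trans, h.trans⟩

theorem eq_of_krewerasRel {C C' : Finset (Fin n)} (hC : C ∈ kreweras P) (hC' : C' ∈ kreweras P)
    {x y : Fin n} (hx : x ∈ C) (hy : y ∈ C') (hxy : KrewerasRel P x y) : C = C' := by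
  obtain ⟨c, rfl⟩ := mem_kreweras.mp hC
  obtain ⟨c', rfl⟩ := mem_kreweras.mp hC'
  rw [krewerasBlock_eq (mem_krewerasBlock.mp hx), krewerasBlock_eq hxy,
    ← krewerasBlock_eq (mem_krewerasBlock.mp hy)]

theorem sameBlock_kreweras_iff {i j : Fin n} :
    SameBlock (kreweras P) i j ↔ KrewerasRel P i j := by
  constructor
  · rintro ⟨C, hC, hi, hj⟩
    obtain ⟨c, rfl⟩ := mem_kreweras.mp hC
    exact (mem_krewerasBlock.mp hi).symm.trans (mem_krewerasBlock.mp hj)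
  · exact fun h => ⟨_, krewerasBlock_mem_kreweras i, self_mem_krewerasBlock i,
      mem_krewerasBlock.mpr h⟩

theorem kreweras_isNCPartition (P : Finset (Finset (Fin n))) :
    IsNCPartition n (kreweras P) := by
  refine ⟨?_, ?_, fun i => ⟨_, krewerasBlock_mem_kreweras i, self_mem_krewerasBlock i⟩, ?_⟩
  · intro C hC
    obtain ⟨c, rfl⟩ := mem_kreweras.mp hC
    exact ⟨c, self_mem_krewerasBlock c⟩
  · intro C hC C' hC' hne
    refine Finset.disjoint_left.mpr fun x hx hx' => hne ?_
    exact eq_of_krewerasRel hC hC' hx hx' (krewerasRel_refl P x)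
  · intro C hC C' hC' hne i hi j hj k hk l hl ⟨hik, hkj, hjl⟩
    have hij := sameBlock_kreweras_iff.mp ⟨C, hC, hi, hj⟩
    have hkl := sameBlock_kreweras_iff.mp ⟨C', hC', hk, hl⟩
    have hcut : between k j = between i j ∩ between k l := by
      ext t
      simp only [mem_between, mem_inter]
      omega
    have hkj : KrewerasRel P k j := by
      rw [KrewerasRel, hcut]
      exact hij.inter hkl
    exact hne (eq_of_krewerasRel hC' hC hk hj hkj).symm

@[simp] theorem evenEmb_lt_evenEmb {a b : Fin n} : evenEmb n a < evenEmb n b ↔ a < b := by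
  simp only [evenEmb, Fin.mk_lt_mk]; omega

@[simp] theorem oddEmb_lt_oddEmb {a b : Fin n} : oddEmb n a < oddEmb n b ↔ a < b := by
  simp only [oddEmb, Fin.mk_lt_mk]; omega

@[simp] theorem evenEmb_lt_oddEmb {a b : Fin n} : evenEmb n a < oddEmb n b ↔ a ≤ b := by
  simp only [evenEmb, oddEmb, Fin.mk_lt_mk]; omega

@[simp] theorem oddEmb_lt_evenEmb {a b : Fin n} : oddEmb n a < evenEmb n b ↔ a < b := by
  simp only [evenEmb, oddEmb, Fin.mk_lt_mk]; omega

theorem image_evenEmb_ne_image_oddEmb {A C : Finset (Fin n)} (hA : A.Nonempty) :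
    A.image (evenEmb n) ≠ C.image (oddEmb n) := by
  intro h
  obtain ⟨a, ha⟩ := hA
  obtain ⟨c, -, hc⟩ := mem_image.mp (h ▸ mem_image_of_mem (evenEmb n) ha)
  have := congrArg Fin.val hc
  simp only [evenEmb, oddEmb] at this
  omega

theorem mem_interleave {Q : Finset (Finset (Fin n))} {B : Finset (Fin (2 * n))} :
    B ∈ interleave n P Q ↔
      (∃ A ∈ P, A.image (evenEmb n) = B) ∨ (∃ C ∈ Q, C.image (oddEmb n) = B) := by
  simp [interleave]

theorem image_evenEmb_mem_interleave {Q : Finset (Finset (Fin n))} {A : Finset (Fin n)}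
    (hA : A ∈ P) : A.image (evenEmb n) ∈ interleave n P Q :=
  mem_union_left _ (mem_image_of_mem _ hA)

theorem image_oddEmb_mem_interleave {Q : Finset (Finset (Fin n))} {C : Finset (Fin n)}
    (hC : C ∈ Q) : C.image (oddEmb n) ∈ interleave n P Q :=
  mem_union_right _ (mem_image_of_mem _ hC)

theorem nonCrossing_interleave {Q : Finset (Finset (Fin n))} (hP : NonCrossing n P)
    (hQ : NonCrossing n Q) (hPQ : ∀ C ∈ Q, ∀ c ∈ C, ∀ c' ∈ C, KrewerasRel P c c') :
    NonCrossing (2 * n) (interleave n P Q) := by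
  intro B₁ hB₁ B₂ hB₂ hne i hi j hj k hk l hl hcross
  rcases mem_interleave.mp hB₁ with ⟨A₁, hA₁, rfl⟩ | ⟨C₁, hC₁, rfl⟩ <;>
    rcases mem_interleave.mp hB₂ with ⟨A₂, hA₂, rfl⟩ | ⟨C₂, hC₂, rfl⟩ <;>
    obtain ⟨a, ha, rfl⟩ := mem_image.mp hi <;> obtain ⟨b, hb, rfl⟩ := mem_image.mp hj <;>
    obtain ⟨c, hc, rfl⟩ := mem_image.mp hk <;> obtain ⟨d, hd, rfl⟩ := mem_image.mp hl <;>
    simp only [evenEmb_lt_evenEmb, oddEmb_lt_oddEmb, evenEmb_lt_oddEmb, oddEmb_lt_evenEmb]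
      at hcross
  · exact hP A₁ hA₁ A₂ hA₂ (by rintro rfl; exact hne rfl) a ha b hb c hc d hd hcross
  · have := (hPQ C₂ hC₂ c hc d hd).mem_iff hA₁ ha hb
    simp only [mem_between] at this
    omega
  · have := (hPQ C₁ hC₁ a ha b hb).mem_iff hA₂ hc hd
    simp only [mem_between] at this
    omega
  · exact hQ C₁ hC₁ C₂ hC₂ (by rintro rfl; exact hne rfl) a ha b hb c hc d hd hcross

theorem krewerasRel_of_nonCrossing_interleave {Q : Finset (Finset (Fin n))}
    (h : NonCrossing (2 * n) (interleave n P Q)) {C : Finset (Fin n)} (hC : C ∈ Q)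
    {c c' : Fin n} (hc : c ∈ C) (hc' : c' ∈ C) : KrewerasRel P c c' := by
  wlog hcc' : c ≤ c' generalizing c c'
  · exact (this hc' hc (le_of_not_ge hcc')).symm
  intro A hA x hx y hy hxS
  by_contra hyS
  rw [mem_between] at hxS hyS
  have hne := image_evenEmb_ne_image_oddEmb (C := C) ⟨x, hx⟩
  have hAi := image_evenEmb_mem_interleave (Q := Q) hA
  have hCi := image_oddEmb_mem_interleave (P := P) hC
  rcases le_or_gt y c with hyc | hcy
  · have hcross : evenEmb n y < oddEmb n c ∧ oddEmb n c < evenEmb n x ∧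
        evenEmb n x < oddEmb n c' := by
      simp only [evenEmb_lt_oddEmb, oddEmb_lt_evenEmb]; omega
    exact h _ hAi _ hCi hne _ (mem_image_of_mem _ hy) _ (mem_image_of_mem _ hx)
      _ (mem_image_of_mem _ hc) _ (mem_image_of_mem _ hc') hcross
  · have hcross : oddEmb n c < evenEmb n x ∧ evenEmb n x < oddEmb n c' ∧
        oddEmb n c' < evenEmb n y := by
      simp only [evenEmb_lt_oddEmb, oddEmb_lt_evenEmb]; omega
    exact h _ hCi _ hAi hne.symm _ (mem_image_of_mem _ hc) _ (mem_image_of_mem _ hc')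
      _ (mem_image_of_mem _ hx) _ (mem_image_of_mem _ hy) hcross

theorem kreweras_isKreweras (hP : NonCrossing n P) : IsKreweras n P (kreweras P) := by
  refine ⟨kreweras_isNCPartition P, nonCrossing_interleave hP (kreweras_isNCPartition P).2.2.2
    fun C hC c hc c' hc' => sameBlock_kreweras_iff.mp ⟨C, hC, hc, hc'⟩, ?_⟩
  intro Q hQ hPQ C hC
  obtain ⟨c, hc⟩ := hQ.1 C hC
  exact ⟨_, krewerasBlock_mem_kreweras c, fun x hx =>
    mem_krewerasBlock.mpr (krewerasRel_of_nonCrossing_interleave hPQ hC hc hx)⟩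

theorem kreweras_anti {Q : Finset (Finset (Fin n))} (h : refines n P Q) :
    refines n (kreweras Q) (kreweras P) := by
  intro C hC
  obtain ⟨c, rfl⟩ := mem_kreweras.mp hC
  exact ⟨_, krewerasBlock_mem_kreweras c, fun x hx =>
    mem_krewerasBlock.mpr ((mem_krewerasBlock.mp hx).of_refines h)⟩

/-- With `b₀` the first point after `a` in the block `B` of `b`, the chord joins the gap before
`b₀` to the gap after the element of `B` preceding `b₀`, or after `max B` if `b₀ = min B`. -/
theorem exists_krewerasRel_separating (hP : IsNCPartition n P) {a b : Fin n}
    (hab : ¬SameBlock P a b) :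
    ∃ i j, KrewerasRel P i j ∧ ¬(a ∈ between i j ↔ b ∈ between i j) := by
  wlog hlt : a < b generalizing a b
  · have hba : b < a := lt_of_le_of_ne (le_of_not_gt hlt) fun h => hab <| by
      obtain ⟨B, hB, hbB⟩ := hP.2.2.1 b
      exact ⟨B, hB, h ▸ hbB, hbB⟩
    obtain ⟨i, j, hij, hsep⟩ := this (fun ⟨B, hB, hb, ha⟩ => hab ⟨B, hB, ha, hb⟩) hba
    exact ⟨i, j, hij, fun h => hsep h.symm⟩
  obtain ⟨B, hB, hbB⟩ := hP.2.2.1 b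
  have haB : a ∉ B := fun haB => hab ⟨B, hB, haB, hbB⟩
  have hafter : (B.filter (a < ·)).Nonempty := ⟨b, mem_filter.mpr ⟨hbB, hlt⟩⟩
  set b₀ := (B.filter (a < ·)).min' hafter
  obtain ⟨hb₀B, hab₀⟩ := mem_filter.mp ((B.filter (a < ·)).min'_mem hafter)
  have hb₀b : b₀ ≤ b := min'_le _ b (mem_filter.mpr ⟨hbB, hlt⟩)
  have hfirst : ∀ z ∈ B, a < z → b₀ ≤ z := fun z hz haz =>
    min'_le _ z (mem_filter.mpr ⟨hz, haz⟩)
  let i : Fin n := ⟨b₀.val - 1, by omega⟩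
  have hi : i.val + 1 = b₀.val := by simp only [i]; omega
  by_cases hbefore : (B.filter (· < b₀)).Nonempty
  · set x := (B.filter (· < b₀)).max' hbefore
    obtain ⟨hxB, hxb₀⟩ := mem_filter.mp ((B.filter (· < b₀)).max'_mem hbefore)
    have hgap : ∀ z ∈ B, ¬(x < z ∧ z < b₀) := fun z hz ⟨hxz, hzb₀⟩ =>
      (le_max' _ z (mem_filter.mpr ⟨hz, hzb₀⟩)).not_gt hxz
    have hxa : x < a := lt_of_le_of_ne
      (le_of_not_gt fun hax => (hfirst x hxB hax).not_gt hxb₀) fun h => haB (h ▸ hxB)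
    refine ⟨x, i, krewerasRel_of_consecutive hP hB hxB hb₀B hxb₀ hgap hi, ?_⟩
    simp only [mem_between]
    omega
  · have hspan : B ⊆ Icc b₀ (B.max' ⟨b, hbB⟩) := fun z hz => mem_Icc.mpr
      ⟨le_of_not_gt fun hzb₀ => hbefore ⟨z, mem_filter.mpr ⟨hz, hzb₀⟩⟩, le_max' B z hz⟩
    refine ⟨i, _, krewerasRel_of_span hP hB hb₀B (max'_mem B _) hspan hi, ?_⟩
    have hby := le_max' B b hbB
    simp only [mem_between]
    omega

theorem sameBlock_iff_forall_krewerasRel (hP : IsNCPartition n P) {a b : Fin n} :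
    SameBlock P a b ↔ ∀ i j, KrewerasRel P i j → (a ∈ between i j ↔ b ∈ between i j) := by
  refine ⟨fun ⟨B, hB, ha, hb⟩ i j hij => hij.mem_iff hB ha hb, fun h => ?_⟩
  by_contra hab
  obtain ⟨i, j, hij, hsep⟩ := exists_krewerasRel_separating hP hab
  exact hsep (h i j hij)

theorem kreweras_injective {P P' : Finset (Finset (Fin n))} (hP : IsNCPartition n P)
    (hP' : IsNCPartition n P') (h : kreweras P = kreweras P') : P = P' := by
  have hsame : ∀ a b, SameBlock P a b ↔ SameBlock P' a b := fun a b => by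
    simp only [sameBlock_iff_forall_krewerasRel hP, sameBlock_iff_forall_krewerasRel hP',
      ← sameBlock_kreweras_iff, h]
  exact (subset_of_sameBlock_iff hP.1 hP.2.1 hP'.2.1 hsame).antisymm
    (subset_of_sameBlock_iff hP'.1 hP'.2.1 hP.2.1 fun a b => (hsame a b).symm)

end Kreweras

/-- The Kreweras complement is an order-reversing bijection on the set of
non-crossing partitions of `[n]`: there is a bijection `f` of the set of
non-crossing partitions with itself such that `f P` is the Kreweras complement
of `P` for every `P`, and `P ≤ Q` implies `f Q ≤ f P` in the refinement order. -/
theorem kreweras_order_reversing_bijection (n : ℕ) :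
    ∃ f : {P : Finset (Finset (Fin n)) // IsNCPartition n P} →
          {P : Finset (Finset (Fin n)) // IsNCPartition n P},
      Function.Bijective f ∧
      (∀ P, IsKreweras n P.1 (f P).1) ∧
      (∀ P Q, refines n P.1 Q.1 → refines n (f Q).1 (f P).1) := by
  refine ⟨fun P => ⟨Kreweras.kreweras P.1, Kreweras.kreweras_isNCPartition P.1⟩, ?_,
    fun P => Kreweras.kreweras_isKreweras P.2.2.2.2, fun P Q h => Kreweras.kreweras_anti h⟩
  rw [← Finite.injective_iff_bijective]
  exact fun P P' h =>
    Subtype.ext (Kreweras.kreweras_injective P.2 P'.2 (congrArg Subtype.val h))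
end
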